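/- arXiv:1211.1287 — 8 statements merged into one kernel-verified Lean document; each statement's English description precedes it below -/
import Mathlib

section
/- Let $K$ be a field and $U, V, W$ finite-dimensional $K$-vector spaces. Suppose $R_{UV} \in \mathrm{End}(U\otimes V)$ is invertible, $R_{UW} \in \mathrm{End}(U\otimes W)$ and $R_{VW} \in \mathrm{End}(V\otimes W)$ satisfy the Yang–Baxter equation $R_{UV,12}\,R_{UW,13}\,R_{VW,23} = R_{VW,23}\,R_{UW,13}\,R_{UV,12}$ in $\mathrm{End}(U\otimes V\otimes W)$, and suppose $m_U \in \mathrm{End}(U)$, $m_V \in \mathrm{End}(V)$ satisfy $(m_U\otimes m_V)\circ R_{UV} = R_{UV}\circ(m_U\otimes m_V)$. Then the transfer operators $T_U := \mathrm{tr}_U\big((m_U\otimes\mathrm{id}_W)\,R_{UW}\big)$ and $T_V := \mathrm{tr}_V\big((m_V\otimes\mathrm{id}_W)\,R_{VW}\big)$ commute in $\mathrm{End}(W)$. -/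
/-!
Write `T_U T_V` as the partial trace over `U ⊗ V` of `(m_U R_{UW})_{13} (m_V R_{VW})_{23}`.
Since `m_U ⊗ m_V` commutes with `R_{UV}`, the Yang–Baxter equation says that conjugating this
operator by `R_{UV,12}` gives `(m_V R_{VW})_{23} (m_U R_{UW})_{13}`, whose partial trace is
`T_V T_U`; and the partial trace over `U ⊗ V` is invariant under conjugation by operators acting
on `U ⊗ V` alone. Identities of partial traces are checked on the operators `φ ⊗ ψ`, which span
`End (X ⊗ Y)` in finite dimensions.
-/

open scoped TensorProduct

noncomputable section

variable (K : Type*) [Field K]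
variable (U V W : Type*)
variable [AddCommGroup U] [Module K U] [AddCommGroup V] [Module K V]
variable [AddCommGroup W] [Module K W]

/-- The operator acting as `R` on tensor factors 1 and 2 of `U ⊗ (V ⊗ W)`. -/
def R12op (R : Module.End K (U ⊗[K] V)) : Module.End K (U ⊗[K] (V ⊗[K] W)) :=
  (TensorProduct.assoc K U V W).toLinearMap ∘ₗ
    LinearMap.rTensor W R ∘ₗ (TensorProduct.assoc K U V W).symm.toLinearMap

/-- The operator acting as `R` on tensor factors 2 and 3 of `U ⊗ (V ⊗ W)`. -/
def R23op (R : Module.End K (V ⊗[K] W)) : Module.End K (U ⊗[K] (V ⊗[K] W)) :=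
  LinearMap.lTensor U R

/-- The canonical isomorphism `U ⊗ (V ⊗ W) ≃ (U ⊗ W) ⊗ V` regrouping factors 1 and 3. -/
def perm13 : (U ⊗[K] (V ⊗[K] W)) ≃ₗ[K] ((U ⊗[K] W) ⊗[K] V) :=
  TensorProduct.congr (LinearEquiv.refl K U) (TensorProduct.comm K V W) ≪≫ₗ
    (TensorProduct.assoc K U W V).symm

/-- The operator acting as `R` on tensor factors 1 and 3 of `U ⊗ (V ⊗ W)`. -/
def R13op (R : Module.End K (U ⊗[K] W)) : Module.End K (U ⊗[K] (V ⊗[K] W)) :=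
  (perm13 K U V W).symm.toLinearMap ∘ₗ LinearMap.rTensor V R ∘ₗ (perm13 K U V W).toLinearMap

section PartialTrace

open TensorProduct LinearMap

variable {K} {X Y M : Type*} [AddCommGroup X] [Module K X] [AddCommGroup Y] [Module K Y]
  [AddCommGroup M] [Module K M] [FiniteDimensional K X] [FiniteDimensional K Y]

theorem Module.End.linearMap_ext_tensorProduct {f g : Module.End K (X ⊗[K] Y) →ₗ[K] M}
    (h : ∀ φ ψ, f (map φ ψ) = g (map φ ψ)) : f = g := by
  let e := homTensorHomEquiv K X Y X Y
  have : f ∘ₗ e.toLinearMap = g ∘ₗ e.toLinearMap :=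
    TensorProduct.ext' fun φ ψ => by simpa [e] using h φ ψ
  exact (LinearMap.cancel_right e.surjective).1 this

variable (K X Y) in
def partialTrace : Module.End K (X ⊗[K] Y) →ₗ[K] Module.End K Y :=
  TensorProduct.lid K (Module.End K Y) ∘ₗ rTensor _ (trace K X) ∘ₗ
    (homTensorHomEquiv K X Y X Y).symm.toLinearMap

theorem partialTrace_map (φ : Module.End K X) (ψ : Module.End K Y) :
    partialTrace K X Y (map φ ψ) = trace K X φ • ψ := by
  have h : (homTensorHomEquiv K X Y X Y).symm (map φ ψ) = φ ⊗ₜ ψ := by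
    rw [LinearEquiv.symm_apply_eq]; simp
  simp [partialTrace, h]

theorem eq_partialTrace {tr : Module.End K (X ⊗[K] Y) →ₗ[K] Module.End K Y}
    (htr : ∀ φ ψ, tr (map φ ψ) = trace K X φ • ψ) : tr = partialTrace K X Y :=
  Module.End.linearMap_ext_tensorProduct fun φ ψ => by rw [htr, partialTrace_map]

theorem partialTrace_lTensor_mul (ψ : Module.End K Y) (A : Module.End K (X ⊗[K] Y)) :
    partialTrace K X Y (lTensor X ψ * A) = ψ * partialTrace K X Y A := by
  have := Module.End.linearMap_ext_tensorProduct
    (f := partialTrace K X Y ∘ₗ mulLeft K (lTensor X ψ)) (g := mulLeft K ψ ∘ₗ partialTrace K X Y)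
    fun φ ψ' => by simp [Module.End.mul_eq_comp, partialTrace_map]
  exact LinearMap.congr_fun this A

theorem partialTrace_mul_lTensor (ψ : Module.End K Y) (A : Module.End K (X ⊗[K] Y)) :
    partialTrace K X Y (A * lTensor X ψ) = partialTrace K X Y A * ψ := by
  have := Module.End.linearMap_ext_tensorProduct
    (f := partialTrace K X Y ∘ₗ mulRight K (lTensor X ψ)) (g := mulRight K ψ ∘ₗ partialTrace K X Y)
    fun φ ψ' => by simp [Module.End.mul_eq_comp, partialTrace_map]
  exact LinearMap.congr_fun this A

theorem partialTrace_rTensor_mul_comm (S : Module.End K X) (A : Module.End K (X ⊗[K] Y)) :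
    partialTrace K X Y (rTensor Y S * A) = partialTrace K X Y (A * rTensor Y S) := by
  have := Module.End.linearMap_ext_tensorProduct
    (f := partialTrace K X Y ∘ₗ mulLeft K (rTensor Y S))
    (g := partialTrace K X Y ∘ₗ mulRight K (rTensor Y S))
    fun φ ψ => by simp [Module.End.mul_eq_comp, partialTrace_map, trace_comp_comm' S φ]
  exact LinearMap.congr_fun this A

end PartialTrace

section

variable {K} {M N : Type*} [AddCommGroup M] [Module K M] [AddCommGroup N] [Module K N]

theorem LinearMap.commute_rTensor_lTensor (f : Module.End K M) (g : Module.End K N) :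
    Commute (f.rTensor N) (g.lTensor M) :=
  (rTensor_comp_lTensor M f g).trans (lTensor_comp_rTensor M f g).symm

end

theorem twisted_yangBaxter {M : Type*} [Monoid M] {r₁₂ r₁₃ r₂₃ m₁ m₂ : M}
    (hYBE : r₁₂ * r₁₃ * r₂₃ = r₂₃ * r₁₃ * r₁₂) (h₁₂ : Commute m₁ m₂) (h₁ : Commute m₁ r₂₃)
    (h₂ : Commute m₂ r₁₃) (hm : Commute (m₁ * m₂) r₁₂) :
    r₁₂ * (m₁ * r₁₃ * (m₂ * r₂₃)) = m₂ * r₂₃ * (m₁ * r₁₃) * r₁₂ := by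
  calc r₁₂ * (m₁ * r₁₃ * (m₂ * r₂₃)) = r₁₂ * (m₁ * m₂) * (r₁₃ * r₂₃) := by
        simp only [mul_assoc, h₂.left_comm]
    _ = m₁ * m₂ * (r₂₃ * r₁₃ * r₁₂) := by rw [hm.symm.eq, ← hYBE]; simp only [mul_assoc]
    _ = m₂ * r₂₃ * (m₁ * r₁₃) * r₁₂ := by
        rw [h₁₂.eq]; simp only [mul_assoc, h₁.left_comm]

section ThreeSites

open TensorProduct LinearMap

def R12opAlgHom : Module.End K (U ⊗[K] V) →ₐ[K] Module.End K (U ⊗[K] (V ⊗[K] W)) :=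
  ((TensorProduct.assoc K U V W).conjAlgEquiv K).toAlgHom.comp (Module.End.rTensorAlgHom K _ W)

@[simp]
theorem R12opAlgHom_apply (R : Module.End K (U ⊗[K] V)) :
    R12opAlgHom K U V W R = R12op K U V W R := rfl

def R13opAlgHom : Module.End K (U ⊗[K] W) →ₐ[K] Module.End K (U ⊗[K] (V ⊗[K] W)) :=
  ((perm13 K U V W).symm.conjAlgEquiv K).toAlgHom.comp (Module.End.rTensorAlgHom K _ V)

@[simp]
theorem R13opAlgHom_apply (R : Module.End K (U ⊗[K] W)) :
    R13opAlgHom K U V W R = R13op K U V W R := rfl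

variable {K U V W}

theorem R13op_mul (A B : Module.End K (U ⊗[K] W)) :
    R13op K U V W (A * B) = R13op K U V W A * R13op K U V W B :=
  map_mul (R13opAlgHom K U V W) A B

theorem R23op_mul (A B : Module.End K (V ⊗[K] W)) :
    R23op K U V W (A * B) = R23op K U V W A * R23op K U V W B :=
  lTensor_mul U A B

theorem R13op_map (φ : Module.End K U) (ψ : Module.End K W) :
    R13op K U V W (map φ ψ) = map φ (lTensor V ψ) := by
  ext u v w; simp [R13op, perm13]

theorem R13op_rTensor (f : Module.End K U) :
    R13op K U V W (rTensor W f) = rTensor (V ⊗[K] W) f := by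
  ext u v w; simp [R13op, perm13]

theorem R23op_rTensor (f : Module.End K V) :
    R23op K U V W (rTensor W f) =
      (perm13 K U V W).symm.conjAlgEquiv K (lTensor (U ⊗[K] W) f) := by
  ext u v w; simp [R23op, perm13]

theorem R12op_map (φ : Module.End K U) (ψ : Module.End K V) :
    R12op K U V W (map φ ψ) = R13op K U V W (rTensor W φ) * R23op K U V W (rTensor W ψ) := by
  ext u v w; simp [R12op, R13op, R23op, perm13]

theorem commute_R13op_rTensor_R23op (f : Module.End K U) (B : Module.End K (V ⊗[K] W)) :
    Commute (R13op K U V W (rTensor W f)) (R23op K U V W B) := by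
  rw [R13op_rTensor]
  exact commute_rTensor_lTensor f B

theorem commute_R23op_rTensor_R13op (f : Module.End K V) (A : Module.End K (U ⊗[K] W)) :
    Commute (R23op K U V W (rTensor W f)) (R13op K U V W A) := by
  rw [R23op_rTensor]
  exact ((commute_rTensor_lTensor A f).symm).map ((perm13 K U V W).symm.conjAlgEquiv K)

theorem assoc_symm_conj_map_map (φ : Module.End K U) (χ : Module.End K V) (ξ : Module.End K W) :
    (TensorProduct.assoc K U V W).symm.conjAlgEquiv K (map φ (map χ ξ)) = map (map φ χ) ξ := by
  ext u v w; simp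

variable [FiniteDimensional K U] [FiniteDimensional K V] [FiniteDimensional K W]

variable (K U V W) in
def partialTrace₁₂ : Module.End K (U ⊗[K] (V ⊗[K] W)) →ₗ[K] Module.End K W :=
  partialTrace K (U ⊗[K] V) W ∘ₗ
    ((TensorProduct.assoc K U V W).symm.conjAlgEquiv K).toLinearMap

theorem partialTrace₁₂_map (φ : Module.End K U) (Z : Module.End K (V ⊗[K] W)) :
    partialTrace₁₂ K U V W (map φ Z) = trace K U φ • partialTrace K V W Z := by
  have := Module.End.linearMap_ext_tensorProduct
    (f := partialTrace₁₂ K U V W ∘ₗ mapBilinear (.id K) U (V ⊗[K] W) U (V ⊗[K] W) φ)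
    (g := trace K U φ • partialTrace K V W)
    fun χ ξ => by
      simp [partialTrace₁₂, assoc_symm_conj_map_map, partialTrace_map, trace_tensorProduct',
        mul_smul]
  exact LinearMap.congr_fun this Z

theorem partialTrace₁₂_R12op_mul_comm (S : Module.End K (U ⊗[K] V))
    (A : Module.End K (U ⊗[K] (V ⊗[K] W))) :
    partialTrace₁₂ K U V W (R12op K U V W S * A) =
      partialTrace₁₂ K U V W (A * R12op K U V W S) := by
  have h : (TensorProduct.assoc K U V W).symm.conjAlgEquiv K (R12op K U V W S) = rTensor W S := by
    ext x; simp [R12op]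
  simp only [partialTrace₁₂, coe_comp, Function.comp_apply, AlgEquiv.toLinearMap_apply, map_mul,
    h, partialTrace_rTensor_mul_comm]

theorem partialTrace₁₂_eq_of_R12op_mul_eq {S : Module.End K (U ⊗[K] V)} (hS : IsUnit S)
    {A B : Module.End K (U ⊗[K] (V ⊗[K] W))} (h : R12op K U V W S * A = B * R12op K U V W S) :
    partialTrace₁₂ K U V W A = partialTrace₁₂ K U V W B := by
  obtain ⟨S, rfl⟩ := hS
  have hinv_mul : R12op K U V W ↑S⁻¹ * R12op K U V W S = 1 := by
    rw [← R12opAlgHom_apply, ← R12opAlgHom_apply, ← map_mul, S.inv_mul, map_one]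
  have hmul_inv : R12op K U V W S * R12op K U V W ↑S⁻¹ = 1 := by
    rw [← R12opAlgHom_apply, ← R12opAlgHom_apply, ← map_mul, S.mul_inv, map_one]
  calc partialTrace₁₂ K U V W A
      = partialTrace₁₂ K U V W (R12op K U V W ↑S⁻¹ * (B * R12op K U V W S)) := by
        rw [← h, ← mul_assoc, hinv_mul, one_mul]
    _ = partialTrace₁₂ K U V W (B * R12op K U V W S * R12op K U V W ↑S⁻¹) :=
        partialTrace₁₂_R12op_mul_comm _ _
    _ = partialTrace₁₂ K U V W B := by rw [mul_assoc, hmul_inv, mul_one]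

theorem partialTrace₁₂_R13op_mul_R23op (A : Module.End K (U ⊗[K] W))
    (B : Module.End K (V ⊗[K] W)) :
    partialTrace₁₂ K U V W (R13op K U V W A * R23op K U V W B) =
      partialTrace K U W A * partialTrace K V W B := by
  have := Module.End.linearMap_ext_tensorProduct
    (f := partialTrace₁₂ K U V W ∘ₗ mulRight K (R23op K U V W B) ∘ₗ
      (R13opAlgHom K U V W).toLinearMap)
    (g := mulRight K (partialTrace K V W B) ∘ₗ partialTrace K U W)
    fun φ ψ => by
      simp only [coe_comp, Function.comp_apply, AlgHom.coe_toLinearMap, R13opAlgHom_apply,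
        mulRight_apply, R13op_map, R23op, Module.End.mul_eq_comp, map_comp_lTensor,
        partialTrace₁₂_map, partialTrace_map, map_smul]
      exact congrArg _ (partialTrace_lTensor_mul ψ B)
  exact LinearMap.congr_fun this A

theorem partialTrace₁₂_R23op_mul_R13op (A : Module.End K (U ⊗[K] W))
    (B : Module.End K (V ⊗[K] W)) :
    partialTrace₁₂ K U V W (R23op K U V W B * R13op K U V W A) =
      partialTrace K V W B * partialTrace K U W A := by
  have := Module.End.linearMap_ext_tensorProduct
    (f := partialTrace₁₂ K U V W ∘ₗ mulLeft K (R23op K U V W B) ∘ₗ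
      (R13opAlgHom K U V W).toLinearMap)
    (g := mulLeft K (partialTrace K V W B) ∘ₗ partialTrace K U W)
    fun φ ψ => by
      simp only [coe_comp, Function.comp_apply, AlgHom.coe_toLinearMap, R13opAlgHom_apply,
        mulLeft_apply, R13op_map, R23op, Module.End.mul_eq_comp, lTensor_comp_map,
        partialTrace₁₂_map, partialTrace_map, map_smul]
      exact congrArg _ (partialTrace_mul_lTensor ψ B)
  exact LinearMap.congr_fun this A

end ThreeSites

/-- **Commutativity of Baxter transfer operators.**  Let `U, V, W` be finite-dimensional
vector spaces over a field `K`.  Suppose `R_{UV} ∈ End(U ⊗ V)` is invertible, the operators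
`R_{UV}, R_{UW}, R_{VW}` satisfy the Yang–Baxter equation
`R_{UV,12} R_{UW,13} R_{VW,23} = R_{VW,23} R_{UW,13} R_{UV,12}` on `U ⊗ V ⊗ W`, and
`m_U ∈ End U`, `m_V ∈ End V` satisfy `(m_U ⊗ m_V) R_{UV} = R_{UV} (m_U ⊗ m_V)`.
Then the transfer operators `T_U = tr_U((m_U ⊗ id_W) R_{UW})` and
`T_V = tr_V((m_V ⊗ id_W) R_{VW})` commute in `End(W)`.  (Here `tr_X` denotes the partial
trace, characterized by `tr_X(φ ⊗ ψ) = tr(φ) ψ`.) -/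
theorem baxter_transfer_commute [FiniteDimensional K U] [FiniteDimensional K V]
    [FiniteDimensional K W]
    (R_UV : Module.End K (U ⊗[K] V)) (R_UW : Module.End K (U ⊗[K] W))
    (R_VW : Module.End K (V ⊗[K] W))
    (hinv : IsUnit R_UV)
    (hYBE : R12op K U V W R_UV * R13op K U V W R_UW * R23op K U V W R_VW =
      R23op K U V W R_VW * R13op K U V W R_UW * R12op K U V W R_UV)
    (mU : Module.End K U) (mV : Module.End K V)
    (hm : TensorProduct.map mU mV * R_UV = R_UV * TensorProduct.map mU mV)
    (trU : Module.End K (U ⊗[K] W) →ₗ[K] Module.End K W)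
    (htrU : ∀ (φ : Module.End K U) (ψ : Module.End K W),
      trU (TensorProduct.map φ ψ) = LinearMap.trace K U φ • ψ)
    (trV : Module.End K (V ⊗[K] W) →ₗ[K] Module.End K W)
    (htrV : ∀ (φ : Module.End K V) (ψ : Module.End K W),
      trV (TensorProduct.map φ ψ) = LinearMap.trace K V φ • ψ) :
    trU (TensorProduct.map mU (LinearMap.id : W →ₗ[K] W) * R_UW) *
        trV (TensorProduct.map mV (LinearMap.id : W →ₗ[K] W) * R_VW) =
      trV (TensorProduct.map mV (LinearMap.id : W →ₗ[K] W) * R_VW) *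
        trU (TensorProduct.map mU (LinearMap.id : W →ₗ[K] W) * R_UW) := by
  obtain rfl := eq_partialTrace htrU
  obtain rfl := eq_partialTrace htrV
  simp only [← LinearMap.rTensor_def]
  rw [← partialTrace₁₂_R13op_mul_R23op, ← partialTrace₁₂_R23op_mul_R13op]
  refine partialTrace₁₂_eq_of_R12op_mul_eq hinv ?_
  have hm₁₂ : Commute (R13op K U V W (mU.rTensor W) * R23op K U V W (mV.rTensor W))
      (R12op K U V W R_UV) := by
    rw [← R12op_map]
    exact Commute.map hm (R12opAlgHom K U V W)
  rw [R13op_mul, R23op_mul]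
  exact twisted_yangBaxter hYBE (commute_R13op_rTensor_R23op _ _)
    (commute_R13op_rTensor_R23op _ _) (commute_R23op_rTensor_R13op _ _) hm₁₂

end
end

section
/- Let $A$ be a commutative ring in which $2$ is invertible, $V$ an $A$-module, and $r \in \mathrm{End}(V\otimes V)$ a symmetric operator, i.e. $\sigma \circ r \circ \sigma = r$ where $\sigma$ is the flip of the two tensor factors. On $V^{\otimes 3}$ set $r_{12} := r\otimes\mathrm{id}$, $r_{23} := \mathrm{id}\otimes r$, and $r_{13} := \sigma_{23}\, r_{12}\, \sigma_{23}$, where $\sigma_{23} = \mathrm{id}\otimes\sigma$. If $r$ satisfies the classical Yang–Baxter equation $[r_{12}, r_{13}] + [r_{12}, r_{23}] + [r_{13}, r_{23}] = 0$, then $[\,r_{12} + r_{13},\; r_{23}\,] = 0$ (equivalently, $[r_{12}, r_{13}] = 0$). -/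
/-!
Conjugation by the involution `σ₂₃` swaps `r₁₂` and `r₁₃` and, because `r` is symmetric, fixes
`r₂₃`. Conjugating the Yang–Baxter equation therefore gives
`[r₁₃, r₁₂] + [r₁₃, r₂₃] + [r₁₂, r₂₃] = 0`; adding it to the original equation cancels the
`[r₁₂, r₁₃]` terms and leaves `2 [r₁₂ + r₁₃, r₂₃] = 0`.
-/

open scoped TensorProduct

noncomputable section

variable (A : Type*) [CommRing A] (V : Type*) [AddCommGroup V] [Module A V]

/-- The flip `σ` of the two tensor factors of `V ⊗ V`. -/
def flipOp : Module.End A (V ⊗[A] V) := (TensorProduct.comm A V V).toLinearMap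

/-- `r₁₂ = r ⊗ id` acting on factors 1 and 2 of `V^{⊗3} = V ⊗ (V ⊗ V)`. -/
def r12op (r : Module.End A (V ⊗[A] V)) : Module.End A (V ⊗[A] (V ⊗[A] V)) :=
  (TensorProduct.assoc A V V V).toLinearMap ∘ₗ
    LinearMap.rTensor V r ∘ₗ (TensorProduct.assoc A V V V).symm.toLinearMap

/-- `r₂₃ = id ⊗ r` acting on factors 2 and 3 of `V^{⊗3} = V ⊗ (V ⊗ V)`. -/
def r23op (r : Module.End A (V ⊗[A] V)) : Module.End A (V ⊗[A] (V ⊗[A] V)) :=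
  LinearMap.lTensor V r

/-- `σ₂₃ = id ⊗ σ`. -/
def sigma23 : Module.End A (V ⊗[A] (V ⊗[A] V)) := LinearMap.lTensor V (flipOp A V)

/-- `r₁₃ = σ₂₃ r₁₂ σ₂₃`. -/
def r13op (r : Module.End A (V ⊗[A] V)) : Module.End A (V ⊗[A] (V ⊗[A] V)) :=
  sigma23 A V * r12op A V r * sigma23 A V

section Involution

variable {R : Type*} [Ring R] {s : R}

theorem conj_conj_of_mul_self_eq_one (hs : s * s = 1) (x : R) : s * (s * x * s) * s = x := by
  simp only [← mul_assoc, hs, one_mul, mul_assoc x s s, mul_one]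

theorem conj_lie_of_mul_self_eq_one (hs : s * s = 1) (x y : R) :
    s * ⁅x, y⁆ * s = ⁅s * x * s, s * y * s⁆ := by
  have conj_mul (u v : R) : s * u * s * (s * v * s) = s * (u * v) * s := by
    simp only [← mul_assoc, mul_assoc _ s s, hs, mul_one]
  rw [Ring.lie_def, Ring.lie_def, conj_mul, conj_mul, mul_sub, sub_mul]

theorem two_nsmul_lie_add_eq_zero_of_conj {a b c : R} (hs : s * s = 1) (hab : s * a * s = b)
    (hc : s * c * s = c) (h : ⁅a, b⁆ + ⁅a, c⁆ + ⁅b, c⁆ = 0) : 2 • ⁅a + b, c⁆ = 0 := by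
  have hba : s * b * s = a := hab ▸ conj_conj_of_mul_self_eq_one hs a
  have h' : ⁅b, a⁆ + ⁅b, c⁆ + ⁅a, c⁆ = 0 := by
    simpa only [mul_add, add_mul, conj_lie_of_mul_self_eq_one hs, hab, hba, hc, mul_zero,
      zero_mul] using congrArg (s * · * s) h
  calc 2 • ⁅a + b, c⁆ = (⁅a, b⁆ + ⁅a, c⁆ + ⁅b, c⁆) + (⁅b, a⁆ + ⁅b, c⁆ + ⁅a, c⁆) := by
        simp only [two_nsmul, Ring.lie_def, add_mul, mul_add]; abel
    _ = 0 := by rw [h, h', add_zero]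

end Involution

theorem eq_zero_of_two_nsmul_eq_zero {A M : Type*} [Semiring A] [Invertible (2 : A)]
    [AddCommMonoid M] [Module A M] {x : M} (h : 2 • x = 0) : x = 0 :=
  (isUnit_of_invertible (2 : A)).smul_eq_zero.mp (by rwa [ofNat_smul_eq_nsmul])

theorem flipOp_mul_self : flipOp A V * flipOp A V = 1 := by
  ext x y
  simp [flipOp]

theorem sigma23_mul_self : sigma23 A V * sigma23 A V = 1 := by
  rw [sigma23, ← LinearMap.lTensor_mul, flipOp_mul_self]
  exact LinearMap.lTensor_id V _

theorem sigma23_conj_r23op {r : Module.End A (V ⊗[A] V)}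
    (hsym : flipOp A V ∘ₗ r ∘ₗ flipOp A V = r) :
    sigma23 A V * r23op A V r * sigma23 A V = r23op A V r := by
  rw [sigma23, r23op, ← LinearMap.lTensor_mul, ← LinearMap.lTensor_mul]
  exact congrArg (LinearMap.lTensor V) hsym

/-- **Symmetric classical r-matrices have commuting mixed terms.**  Let `A` be a commutative
ring in which `2` is invertible, `V` an `A`-module, and `r ∈ End(V ⊗ V)` symmetric, i.e.
`σ ∘ r ∘ σ = r` for the flip `σ`.  If `r` satisfies the classical Yang–Baxter equation
`[r₁₂, r₁₃] + [r₁₂, r₂₃] + [r₁₃, r₂₃] = 0`, then `[r₁₂ + r₁₃, r₂₃] = 0`. -/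
theorem symmetric_cybe_commute [Invertible (2 : A)] (r : Module.End A (V ⊗[A] V))
    (hsym : flipOp A V ∘ₗ r ∘ₗ flipOp A V = r)
    (hCYB : ⁅r12op A V r, r13op A V r⁆ + ⁅r12op A V r, r23op A V r⁆ +
        ⁅r13op A V r, r23op A V r⁆ = 0) :
    ⁅r12op A V r + r13op A V r, r23op A V r⁆ = 0 :=
  eq_zero_of_two_nsmul_eq_zero (A := A) <|
    two_nsmul_lie_add_eq_zero_of_conj (sigma23_mul_self A V) rfl (sigma23_conj_r23op A V hsym) hCYB

end
end

section
/- Let $K$ be a field, $d \ge 1$ an integer, and $\alpha \in \mathbb{N}^d$ nonzero. For each $v \in \mathbb{Z}^d$ let $M_v$ be a finite-dimensional $K$-vector space with $M_v = 0$ unless $v \in \mathbb{N}^d$, and let $e_v : M_v \to M_{v+\alpha}$ and $f_v : M_v \to M_{v-\alpha}$ be $K$-linear maps. Assume that for every $v$ there is a scalar $c_v \in K$ with $e_{v-\alpha}\circ f_v - f_{v+\alpha}\circ e_v = c_v\cdot\mathrm{id}_{M_v}$. Then in the formal power series ring $K[[q_1,\dots,q_d]]$ one has $(1 - q^{\alpha})\,\sum_{v\in\mathbb{N}^d}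 \mathrm{tr}\big(e_{v-\alpha}\circ f_v\big)\, q^{v} \;=\; -\,q^{\alpha}\,\sum_{v\in\mathbb{N}^d} c_v\, (\dim_K M_v)\, q^{v}$, where $q^{v} := \prod_{i=1}^d q_i^{v_i}$. -/
/-!
Write `t_v` for the trace of `e ∘ f` on `M_v`. Taking traces in the commutator relation gives
`t_v - tr(f ∘ e |_{M_v}) = c_v dim M_v`, and cyclicity of the trace, applied to
`e : M_v → M_{v+α}` and `f : M_{v+α} → M_v`, gives `tr(f ∘ e |_{M_v}) = t_{v+α}`. Hence
`t_v - t_{v+α} = c_v dim M_v`; moreover `t_v = 0` unless `v ≥ α`, since otherwise `f` maps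
`M_v` into `M_{v-α} = 0`. These two facts are the coefficientwise form of the identity.
-/

noncomputable section

/-- The formal power series `∑_{v ∈ ℕ^d} f(v) q^v` with coefficient function `f`. -/
def seriesOf {K : Type*} [Field K] {d : ℕ} (f : (Fin d →₀ ℕ) → K) :
    MvPowerSeries (Fin d) K := f

theorem coeff_seriesOf {K : Type*} [Field K] {d : ℕ} (f : (Fin d →₀ ℕ) → K)
    (n : Fin d →₀ ℕ) :
    MvPowerSeries.coeff n (seriesOf f) = f n :=
  rfl

theorem MvPowerSeries.one_sub_monomial_mul_eq_neg_monomial_mul {σ R : Type*} [CommRing R]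
    {A : σ →₀ ℕ} {φ ψ : MvPowerSeries σ R} (hφ : ∀ n, ¬ A ≤ n → coeff n φ = 0)
    (hstep : ∀ m, coeff m φ - coeff (m + A) φ = coeff m ψ) :
    (1 - monomial A 1) * φ = -(monomial A 1) * ψ := by
  ext n
  rw [sub_mul, one_mul, neg_mul, map_sub, map_neg, coeff_monomial_mul, coeff_monomial_mul]
  by_cases hA : A ≤ n
  · obtain ⟨m, rfl⟩ : ∃ m, n = m + A := ⟨n - A, (tsub_add_cancel_of_le hA).symm⟩
    rw [if_pos hA, if_pos hA, add_tsub_cancel_right, one_mul, one_mul, ← hstep]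
    ring
  · rw [if_neg hA, if_neg hA, sub_zero, neg_zero, hφ n hA]

section Trace

open LinearMap

variable {K V : Type*} [Field K] [AddCommGroup V] [Module K V] {E F : V →ₗ[K] V}

theorem trace_restrict_comp_comm {P Q : Submodule K V} [FiniteDimensional K P]
    [FiniteDimensional K Q] (hE : ∀ x ∈ P, E x ∈ Q) (hF : ∀ x ∈ Q, F x ∈ P)
    (hFE : ∀ x ∈ P, (F ∘ₗ E) x ∈ P) (hEF : ∀ x ∈ Q, (E ∘ₗ F) x ∈ Q) :
    trace K P ((F ∘ₗ E).restrict hFE) = trace K Q ((E ∘ₗ F).restrict hEF) := by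
  rw [restrict_comp hE hF, restrict_comp hF hE, trace_comp_comm']

theorem trace_restrict_comp_sub_comp {P : Submodule K V} [FiniteDimensional K P] {c : K}
    (hEF : ∀ x ∈ P, (E ∘ₗ F) x ∈ P) (hFE : ∀ x ∈ P, (F ∘ₗ E) x ∈ P)
    (hcomm : ∀ x ∈ P, E (F x) - F (E x) = c • x) :
    trace K P ((E ∘ₗ F).restrict hEF) - trace K P ((F ∘ₗ E).restrict hFE) =
      c * Module.finrank K P := by
  have hres : (E ∘ₗ F).restrict hEF - (F ∘ₗ E).restrict hFE = c • LinearMap.id := by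
    ext x
    simpa using hcomm x x.2
  rw [← map_sub, hres, map_smul, trace_id, smul_eq_mul]

theorem restrict_comp_eq_zero_of_mapsTo_bot {P : Submodule K V}
    (hF : ∀ x ∈ P, F x ∈ (⊥ : Submodule K V))
    (hEF : ∀ x ∈ P, (E ∘ₗ F) x ∈ P) : (E ∘ₗ F).restrict hEF = 0 := by
  ext x
  simp [(Submodule.mem_bot K).mp (hF x x.2)]

end Trace

theorem graded_trace_identity_general {K : Type*} [Field K] {d : ℕ}
    (α : Fin d → ℕ)
    {Amb : Type*} [AddCommGroup Amb] [Module K Amb]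
    (M : (Fin d → ℤ) → Submodule K Amb)
    [∀ v, FiniteDimensional K (M v)]
    (hM0 : ∀ v, (¬ ∀ i, 0 ≤ v i) → M v = ⊥)
    (E F : Amb →ₗ[K] Amb)
    (hE : ∀ v, ∀ x ∈ M v, E x ∈ M (v + fun i => (α i : ℤ)))
    (hF : ∀ v, ∀ x ∈ M v, F x ∈ M (v - fun i => (α i : ℤ)))
    (hEF : ∀ v, ∀ x ∈ M v, (E ∘ₗ F) x ∈ M v)
    (c : (Fin d → ℤ) → K)
    (hcomm : ∀ v, ∀ x ∈ M v, E (F x) - F (E x) = c v • x) :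
    (1 - MvPowerSeries.monomial (R := K) (Finsupp.equivFunOnFinite.symm α) 1) *
        seriesOf (fun v : Fin d →₀ ℕ =>
          LinearMap.trace K ↥(M fun i => (v i : ℤ))
            ((E ∘ₗ F).restrict (hEF fun i => (v i : ℤ))))
      = -(MvPowerSeries.monomial (R := K) (Finsupp.equivFunOnFinite.symm α) 1) *
          seriesOf (fun v : Fin d →₀ ℕ =>
            c (fun i => (v i : ℤ)) *
              (Module.finrank K ↥(M fun i => (v i : ℤ)) : K)) := by
  have hFback : ∀ v, ∀ x ∈ M (v + fun i => (α i : ℤ)), F x ∈ M v := fun v x hx => by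
    simpa using hF _ x hx
  apply MvPowerSeries.one_sub_monomial_mul_eq_neg_monomial_mul
  · intro n hn
    obtain ⟨i, hi⟩ : ∃ i, n i < α i := by simpa [Finsupp.le_def] using hn
    rw [coeff_seriesOf, restrict_comp_eq_zero_of_mapsTo_bot (P := M _) (E := E) ?_, map_zero]
    rw [← hM0 ((fun i => (n i : ℤ)) - fun i => (α i : ℤ)) fun h => by
      have := h i
      simp only [Pi.sub_apply, sub_nonneg, Nat.cast_le] at this
      omega]
    exact hF _
  · intro m
    have hshift : (fun i => ((m + Finsupp.equivFunOnFinite.symm α) i : ℤ)) =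
        (fun i => (m i : ℤ)) + fun i => (α i : ℤ) := by
      ext i; simp
    rw [coeff_seriesOf, coeff_seriesOf, coeff_seriesOf, hshift,
      ← trace_restrict_comp_comm (hE _) (hFback _) fun x hx => hFback _ _ (hE _ x hx)]
    exact trace_restrict_comp_sub_comp _ _ (hcomm _)

theorem graded_trace_identity {K : Type*} [Field K] {d : ℕ} (hd : 1 ≤ d)
    (α : Fin d → ℕ) (hα : α ≠ 0)
    {Amb : Type*} [AddCommGroup Amb] [Module K Amb]
    (M : (Fin d → ℤ) → Submodule K Amb)
    [∀ v, FiniteDimensional K (M v)]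
    (hM0 : ∀ v, (¬ ∀ i, 0 ≤ v i) → M v = ⊥)
    (E F : Amb →ₗ[K] Amb)
    (hE : ∀ v, ∀ x ∈ M v, E x ∈ M (v + fun i => (α i : ℤ)))
    (hF : ∀ v, ∀ x ∈ M v, F x ∈ M (v - fun i => (α i : ℤ)))
    (hEF : ∀ v, ∀ x ∈ M v, (E ∘ₗ F) x ∈ M v)
    (c : (Fin d → ℤ) → K)
    (hcomm : ∀ v, ∀ x ∈ M v, E (F x) - F (E x) = c v • x) :
    (1 - MvPowerSeries.monomial (R := K) (Finsupp.equivFunOnFinite.symm α) 1) *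
        seriesOf (fun v : Fin d →₀ ℕ =>
          LinearMap.trace K ↥(M fun i => (v i : ℤ))
            ((E ∘ₗ F).restrict (hEF fun i => (v i : ℤ))))
      = -(MvPowerSeries.monomial (R := K) (Finsupp.equivFunOnFinite.symm α) 1) *
          seriesOf (fun v : Fin d →₀ ℕ =>
            c (fun i => (v i : ℤ)) *
              (Module.finrank K ↥(M fun i => (v i : ℤ)) : K)) :=
  graded_trace_identity_general α M hM0 E F hE hF hEF c hcomm

end
end

section
/- Let $K$ be a commutative ring, $t$ an indeterminate, $m \ge 1$, and $d_1,\dots,d_m \ge 1$ with $N = \sum_k d_k$. Regard $N\times N$ matrices over $K[[t]]$ in $m\times m$ block form with block sizes $d_1,\dots,d_m$. Let $U$, $R$, $S$ be such matrices satisfying: $U_{ij} = 0$ for $i < j$ (block lower triangular), $S_{ij} = 0$ for $i > j$ (block upper triangular), $U \equiv R \equiv S \equiv I_N \pmod{t}$, and $U\,R = S$. Then for every $k$ the diagonal block $U_{kk}$ is invertible in $M_{d_k}(K[[t]])$, and $U_{kk}^{-1} S_{kk} \;\equiv\; R_{kk} \;-\; \sum_{i<k} R_{ki}\, R_{ik}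 \pmod{t^3}$. -/
/-!
Write `T = {i | i < k}`. Row `k` of `U R = S` reads `S k q = U k k R k q + ∑_{i ∈ T} U k i R i q`.
For `j < k` the left side vanishes; as off-diagonal blocks are `O(t)` and `R j j ≡ 1`, this says
`U k j ≡ -U k k R k j (mod t²)`. At `q = k` the row then gives
`S k k - U k k (R k k - ∑_{i ∈ T} R k i R i k) = ∑_{i ∈ T} (U k i + U k k R k i) R i k`,
a sum of products of an `O(t²)` and an `O(t)` block. The diagonal block `U k k ≡ 1 (mod t)` is
invertible because its determinant has constant term `1`.
-/

noncomputable section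

def MatCong {K : Type*} [CommRing K] {a b : Type*} (r : ℕ)
    (A B : Matrix a b (PowerSeries K)) : Prop :=
  ∀ p q, (PowerSeries.X : PowerSeries K) ^ r ∣ (A p q - B p q)

open Finset PowerSeries

def MatDvd {K : Type*} [CommRing K] {a b : Type*} (r : ℕ) (A : Matrix a b (PowerSeries K)) :
    Prop :=
  ∀ p q, (X : PowerSeries K) ^ r ∣ A p q

namespace MatDvd

variable {K : Type*} [CommRing K] {a b c : Type*} {r s : ℕ}

theorem add {A B : Matrix a b (PowerSeries K)} (hA : MatDvd r A) (hB : MatDvd r B) :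
    MatDvd r (A + B) :=
  fun p q => dvd_add (hA p q) (hB p q)

theorem neg {A : Matrix a b (PowerSeries K)} (hA : MatDvd r A) : MatDvd r (-A) :=
  fun p q => (hA p q).neg_right

theorem sum {ι : Type*} {t : Finset ι} {f : ι → Matrix a b (PowerSeries K)}
    (h : ∀ i ∈ t, MatDvd r (f i)) : MatDvd r (∑ i ∈ t, f i) := fun p q => by
  rw [Matrix.sum_apply]
  exact dvd_sum fun i hi => h i hi p q

theorem mul [Fintype b] {A : Matrix a b (PowerSeries K)} {B : Matrix b c (PowerSeries K)}
    (hA : MatDvd r A) (hB : MatDvd s B) : MatDvd (r + s) (A * B) := fun p q => by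
  rw [Matrix.mul_apply, pow_add]
  exact dvd_sum fun j _ => mul_dvd_mul (hA p j) (hB j q)

theorem mul_left [Fintype b] (A : Matrix a b (PowerSeries K)) {B : Matrix b c (PowerSeries K)}
    (hB : MatDvd r B) : MatDvd r (A * B) := fun p q => by
  rw [Matrix.mul_apply]
  exact dvd_sum fun j _ => (hB j q).mul_left _

end MatDvd

section

variable {K : Type*} [CommRing K] {a b : Type*} {r : ℕ}

theorem matCong_iff_matDvd_sub {A B : Matrix a b (PowerSeries K)} :
    MatCong r A B ↔ MatDvd r (A - B) :=
  Iff.rfl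

theorem matCong_zero_iff_matDvd {A : Matrix a b (PowerSeries K)} :
    MatCong r A 0 ↔ MatDvd r A := by
  rw [matCong_iff_matDvd_sub, sub_zero]

theorem Matrix.isUnit_of_matCong_one [Fintype a] [DecidableEq a]
    {A : Matrix a a (PowerSeries K)} (hA : MatCong 1 A 1) : IsUnit A := by
  have hA0 : A.map constantCoeff = 1 := by
    ext p q
    have h := X_dvd_iff.1 (pow_one (X : PowerSeries K) ▸ hA p q)
    rw [map_sub, sub_eq_zero] at h
    rw [Matrix.map_apply, h, Matrix.one_apply, Matrix.one_apply]
    split_ifs <;> simp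
  rw [Matrix.isUnit_iff_isUnit_det, isUnit_iff_constantCoeff, RingHom.map_det,
    RingHom.mapMatrix_apply, hA0, Matrix.det_one]
  exact isUnit_one

theorem matCong_inverse_mul_of_matDvd [Fintype a] [DecidableEq a]
    {A : Matrix a a (PowerSeries K)} {B C : Matrix a b (PowerSeries K)} (hA : IsUnit A)
    (h : MatDvd r (B - A * C)) : MatCong r (Ring.inverse A * B) C := by
  have e : Ring.inverse A * B - C = Ring.inverse A * (B - A * C) := by
    rw [Matrix.mul_sub, ← Matrix.mul_assoc, Ring.inverse_mul_cancel A hA, Matrix.one_mul]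
  rw [matCong_iff_matDvd_sub, e]
  exact h.mul_left _

end

section BlockGauss

variable {K : Type*} [CommRing K] {ι : Type*} [Fintype ι] [LinearOrder ι] {n : ι → Type*}
  [∀ i, Fintype (n i)] {U R S : ∀ i j, Matrix (n i) (n j) (PowerSeries K)}

theorem sum_mul_eq_diag_add_sum_lt (hUtri : ∀ i j, i < j → U i j = 0) (i j : ι) :
    ∑ l, U i l * R l j = U i i * R i j + ∑ l ∈ univ.filter (· < i), U i l * R l j := by
  rw [← sum_filter_add_sum_filter_not univ (· < i), add_comm]
  congr 1
  refine sum_eq_single_of_mem i (by simp) fun l hl hli => ?_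
  have hil : i < l := lt_of_le_of_ne (not_lt.mp (mem_filter.1 hl).2) (Ne.symm hli)
  rw [hUtri i l hil, Matrix.zero_mul]

variable [∀ i, DecidableEq (n i)]
  (hUtri : ∀ i j, i < j → U i j = 0) (hStri : ∀ i j, j < i → S i j = 0)
  (hmul : ∀ i j, ∑ l, U i l * R l j = S i j)
  (hU0 : ∀ i j, i ≠ j → MatDvd 1 (U i j))
  (hR1 : ∀ i, MatDvd 1 (R i i - 1)) (hR0 : ∀ i j, i ≠ j → MatDvd 1 (R i j))
include hUtri hStri hmul hU0 hR1 hR0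

theorem matDvd_two_subdiag_add_diag_mul {j k : ι} (hjk : j < k) :
    MatDvd 2 (U k j + U k k * R k j) := by
  have hj : j ∈ univ.filter (· < k) := mem_filter.2 ⟨mem_univ j, hjk⟩
  have h0 := sum_mul_eq_diag_add_sum_lt (R := R) hUtri k j
  rw [hmul, hStri k j hjk, ← add_sum_erase _ _ hj] at h0
  have e : U k j + U k k * R k j =
      -(U k j * (R j j - 1) + ∑ i ∈ (univ.filter (· < k)).erase j, U k i * R i j) := by
    rw [eq_neg_of_add_eq_zero_left h0.symm, Matrix.mul_sub, Matrix.mul_one]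
    abel
  rw [e]
  refine (MatDvd.add ((hU0 k j hjk.ne').mul (hR1 j)) (MatDvd.sum fun i hi => ?_)).neg
  obtain ⟨hij, hi⟩ := mem_erase.1 hi
  exact (hU0 k i (mem_filter.1 hi).2.ne').mul (hR0 i j hij)

theorem matDvd_three_diag_sub (k : ι) :
    MatDvd 3 (S k k - U k k * (R k k - ∑ i ∈ univ.filter (· < k), R k i * R i k)) := by
  have e : S k k - U k k * (R k k - ∑ i ∈ univ.filter (· < k), R k i * R i k) =
      ∑ i ∈ univ.filter (· < k), (U k i + U k k * R k i) * R i k := by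
    simp only [Matrix.add_mul, Matrix.mul_assoc, sum_add_distrib, ← Matrix.mul_sum,
      Matrix.mul_sub]
    rw [← hmul, sum_mul_eq_diag_add_sum_lt hUtri]
    abel
  rw [e]
  refine MatDvd.sum fun i hi => ?_
  have hik := (mem_filter.1 hi).2
  exact (matDvd_two_subdiag_add_diag_mul hUtri hStri hmul hU0 hR1 hR0 hik).mul
    (hR0 i k hik.ne)

end BlockGauss

theorem block_gauss_diagonal_general {K : Type*} [CommRing K] {m : ℕ}
    (d : Fin m → ℕ)
    (U R S : ∀ i j : Fin m, Matrix (Fin (d i)) (Fin (d j)) (PowerSeries K))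
    (hUtri : ∀ i j, i < j → U i j = 0)
    (hStri : ∀ i j, j < i → S i j = 0)
    (hU1 : ∀ i, MatCong 1 (U i i) 1) (hU0 : ∀ i j, i ≠ j → MatCong 1 (U i j) 0)
    (hR1 : ∀ i, MatCong 1 (R i i) 1) (hR0 : ∀ i j, i ≠ j → MatCong 1 (R i j) 0)
    (hmul : ∀ i j, ∑ k, U i k * R k j = S i j)
    (k : Fin m) :
    IsUnit (U k k) ∧
      MatCong 3 (Ring.inverse (U k k) * S k k)
        (R k k - ∑ i ∈ Finset.univ.filter (fun i => i < k), R k i * R i k) := by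
  have hUkk : IsUnit (U k k) := Matrix.isUnit_of_matCong_one (hU1 k)
  have hdiag := matDvd_three_diag_sub hUtri hStri hmul
    (fun i j h => matCong_zero_iff_matDvd.1 (hU0 i j h)) hR1
    (fun i j h => matCong_zero_iff_matDvd.1 (hR0 i j h)) k
  exact ⟨hUkk, matCong_inverse_mul_of_matDvd hUkk hdiag⟩

/-- **Diagonal blocks of a block Gauss factorization, through order `t²`.**
Let `K` be a commutative ring, and regard `N×N` matrices over `K[[t]]` in `m×m` block
form with block sizes `d₁, …, d_m ≥ 1`.  Let `U`, `R`, `S` be such matrices with `U`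
block lower triangular, `S` block upper triangular, `U ≡ R ≡ S ≡ I (mod t)`, and
`U R = S`.  Then every diagonal block `U_{kk}` is invertible in `M_{d_k}(K[[t]])` and
`U_{kk}⁻¹ S_{kk} ≡ R_{kk} - ∑_{i<k} R_{ki} R_{ik} (mod t³)`. -/
theorem block_gauss_diagonal {K : Type*} [CommRing K] {m : ℕ} (hm : 1 ≤ m)
    (d : Fin m → ℕ) (hd : ∀ k, 1 ≤ d k)
    (U R S : ∀ i j : Fin m, Matrix (Fin (d i)) (Fin (d j)) (PowerSeries K))
    (hUtri : ∀ i j, i < j → U i j = 0)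
    (hStri : ∀ i j, j < i → S i j = 0)
    (hU1 : ∀ i, MatCong 1 (U i i) 1) (hU0 : ∀ i j, i ≠ j → MatCong 1 (U i j) 0)
    (hR1 : ∀ i, MatCong 1 (R i i) 1) (hR0 : ∀ i j, i ≠ j → MatCong 1 (R i j) 0)
    (hS1 : ∀ i, MatCong 1 (S i i) 1) (hS0 : ∀ i j, i ≠ j → MatCong 1 (S i j) 0)
    (hmul : ∀ i j, ∑ k, U i k * R k j = S i j)
    (k : Fin m) :
    IsUnit (U k k) ∧
      MatCong 3 (Ring.inverse (U k k) * S k k)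
        (R k k - ∑ i ∈ Finset.univ.filter (fun i => i < k), R k i * R i k) :=
  block_gauss_diagonal_general d U R S hUtri hStri hU1 hU0 hR1 hR0 hmul k

end
end

section
/- Let $n \ge 1$ and let $S \in M_n(\mathbb{R})$ be a symmetric matrix. Then the matrix $C(t) := (1+t^2)\,I_n - t\,S$, regarded over the field $\mathbb{C}(t)$ of rational functions, is invertible, and every entry of $C(t)^{-1}$ has a pole of order at most $2$ at every point $z \in \mathbb{C}$; that is, for each $i,j$ and each $z \in \mathbb{C}$, the rational function $(t-z)^2\,\big(C(t)^{-1}\big)_{ij}$ has no pole at $t = z$. -/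
/-!
A real symmetric `S` is orthogonally diagonalizable, `S = U diag(λ) Uᵀ`, so
`C(t) = U diag(t² - λₖ t + 1) Uᵀ` with `U` constant. Hence `C(t)` is invertible and each entry
of `C(t)⁻¹` is a constant linear combination of the `1 / (t² - λₖ t + 1)`, whose poles, having
a quadratic denominator, are of order at most `2`.
-/

noncomputable section

/-- The matrix `C(t) = (1+t²) Iₙ - t S`, with `S` a real matrix, regarded over the field
`ℂ(t)` of rational functions. -/
def Cmat (n : ℕ) (S : Matrix (Fin n) (Fin n) ℝ) : Matrix (Fin n) (Fin n) (RatFunc ℂ) :=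
  (1 + (RatFunc.X : RatFunc ℂ) ^ 2) • (1 : Matrix (Fin n) (Fin n) (RatFunc ℂ))
    - (RatFunc.X : RatFunc ℂ) • S.map (fun x => RatFunc.C (x : ℂ))

open Polynomial

namespace Matrix

variable {n R : Type*} [Fintype n] [DecidableEq n] [CommRing R] {U V : Matrix n n R}

theorem inv_mul_mul_of_mul_eq_one (h : U * V = 1) (A : Matrix n n R) :
    (U * A * V)⁻¹ = U * A⁻¹ * V := by
  rw [mul_inv_rev, mul_inv_rev, inv_eq_right_inv h, inv_eq_left_inv h, mul_assoc]

theorem isUnit_mul_mul_iff_of_mul_eq_one (h : U * V = 1) {A : Matrix n n R} :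
    IsUnit (U * A * V) ↔ IsUnit A := by
  have hdet : U.det * V.det = 1 := by rw [← det_mul, h, det_one]
  rw [isUnit_iff_isUnit_det, isUnit_iff_isUnit_det A, det_mul, det_mul, mul_right_comm,
    hdet, one_mul]

theorem smul_one_sub_smul_mul_diagonal_mul (h : U * V = 1) (a b : R) (d : n → R) :
    a • (1 : Matrix n n R) - b • (U * diagonal d * V) =
      U * diagonal (fun k => a - b * d k) * V := by
  have : diagonal (fun k => a - b * d k) = a • 1 - b • diagonal d := by
    ext i j; by_cases hij : i = j <;> simp [hij]
  rw [this, mul_sub, sub_mul, Matrix.mul_smul, Matrix.smul_mul, mul_one, h, Matrix.mul_smul,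
    Matrix.smul_mul]

theorem map_mul_map_eq_one {S : Type*} [CommRing S] (f : R →+* S) (h : U * V = 1) :
    U.map f * V.map f = 1 := by
  rw [← Matrix.map_mul, h, Matrix.map_one _ f.map_zero f.map_one]

theorem mul_diagonal_mul_apply (U V : Matrix n n R) (d : n → R) (i j : n) :
    (U * diagonal d * V) i j = ∑ k, U i k * d k * V k j := by
  rw [mul_apply]; simp only [mul_diagonal]

theorem inv_diagonal_of_ne_zero {K : Type*} [Field K] {d : n → K} (hd : ∀ k, d k ≠ 0) :
    (diagonal d)⁻¹ = diagonal fun k => (d k)⁻¹ :=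
  inv_eq_right_inv <| by
    rw [diagonal_mul_diagonal, ← diagonal_one]
    exact congrArg diagonal (funext fun k => mul_inv_cancel₀ (hd k))

theorem IsSymm.exists_mul_diagonal_mul {S : Matrix n n ℝ} (hS : S.IsSymm) :
    ∃ (U V : Matrix n n ℝ) (μ : n → ℝ), U * V = 1 ∧ S = U * diagonal μ * V :=
  have hH : S.IsHermitian := isHermitian_iff_isSymm.mpr hS
  ⟨_, _, RCLike.ofReal ∘ hH.eigenvalues, Unitary.coe_mul_star_self hH.eigenvectorUnitary,
    hH.spectral_theorem⟩

end Matrix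

namespace RatFunc

variable {K : Type*} [Field K]

def regularAt (z : K) : Subring (RatFunc K) where
  carrier := {f | ∃ p q : K[X], q.eval z ≠ 0 ∧
    f = algebraMap K[X] (RatFunc K) p / algebraMap K[X] (RatFunc K) q}
  zero_mem' := ⟨0, 1, by simp, by simp⟩
  one_mem' := ⟨1, 1, by simp, by simp⟩
  neg_mem' := by
    rintro _ ⟨p, q, hq, rfl⟩
    exact ⟨-p, q, hq, by rw [map_neg, neg_div]⟩
  add_mem' := by
    rintro _ _ ⟨p₁, q₁, hq₁, rfl⟩ ⟨p₂, q₂, hq₂, rfl⟩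
    have h₁ : q₁ ≠ 0 := by rintro rfl; simp at hq₁
    have h₂ : q₂ ≠ 0 := by rintro rfl; simp at hq₂
    refine ⟨p₁ * q₂ + p₂ * q₁, q₁ * q₂, by simp [hq₁, hq₂], ?_⟩
    rw [div_add_div _ _ (algebraMap_ne_zero h₁) (algebraMap_ne_zero h₂)]
    simp only [map_add, map_mul, mul_comm]
  mul_mem' := by
    rintro _ _ ⟨p₁, q₁, hq₁, rfl⟩ ⟨p₂, q₂, hq₂, rfl⟩
    exact ⟨p₁ * p₂, q₁ * q₂, by simp [hq₁, hq₂],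
      by rw [div_mul_div_comm, map_mul, map_mul]⟩

theorem mem_regularAt_iff {z : K} {f : RatFunc K} : f ∈ regularAt z ↔ f.denom.eval z ≠ 0 := by
  refine ⟨?_, fun h => ⟨f.num, f.denom, h, (num_div_denom f).symm⟩⟩
  rintro ⟨p, q, hq, rfl⟩
  have hq₀ : q ≠ 0 := by rintro rfl; simp at hq
  obtain ⟨r, hr⟩ := (denom_dvd hq₀).mpr ⟨p, rfl⟩
  exact fun h => hq (by rw [hr, Polynomial.eval_mul, h, zero_mul])

theorem C_mem_regularAt (z c : K) : C c ∈ regularAt z :=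
  ⟨Polynomial.C c, 1, by simp, by simp [algebraMap_C]⟩

theorem X_sub_C_pow_div_mem_regularAt (z : K) {m : ℕ} {q : K[X]} (hq : q ≠ 0)
    (hm : q.natDegree ≤ m) : (X - C z) ^ m / algebraMap K[X] (RatFunc K) q ∈ regularAt z := by
  set r := rootMultiplicity z q
  set s := q /ₘ (Polynomial.X - Polynomial.C z) ^ r
  have hfactor : (Polynomial.X - Polynomial.C z) ^ r * s = q :=
    q.pow_mul_divByMonic_rootMultiplicity_eq z
  have hs : s ≠ 0 := by rintro h; rw [h, mul_zero] at hfactor; exact hq hfactor.symm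
  have hrm : r ≤ m := by
    have := natDegree_le_of_dvd (q.pow_rootMultiplicity_dvd z) hq
    rw [natDegree_pow, natDegree_X_sub_C, mul_one] at this
    omega
  refine ⟨(Polynomial.X - Polynomial.C z) ^ (m - r), s,
    eval_divByMonic_pow_rootMultiplicity_ne_zero z hq, ?_⟩
  have hXz : X - C z = algebraMap K[X] (RatFunc K) (Polynomial.X - Polynomial.C z) := by
    rw [map_sub, algebraMap_X, algebraMap_C]
  rw [hXz, ← map_pow, div_eq_div_iff (algebraMap_ne_zero hq) (algebraMap_ne_zero hs),
    ← map_mul, ← map_mul, ← hfactor, ← mul_assoc, ← pow_add, Nat.sub_add_cancel hrm]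

open Matrix

variable {n : Type*} [Fintype n] [DecidableEq n] {U V : Matrix n n K} {q : n → K[X]}

theorem isUnit_map_C_mul_diagonal_mul (hUV : U * V = 1) (hq : ∀ k, q k ≠ 0) :
    IsUnit (U.map C * diagonal (fun k => algebraMap K[X] (RatFunc K) (q k)) * V.map C) := by
  rw [isUnit_mul_mul_iff_of_mul_eq_one (map_mul_map_eq_one C hUV),
    isUnit_diagonal, Pi.isUnit_iff]
  exact fun k => (algebraMap_ne_zero (hq k)).isUnit

theorem X_sub_C_pow_mul_inv_apply_mem_regularAt (hUV : U * V = 1) (hq : ∀ k, q k ≠ 0) {m : ℕ}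
    (hm : ∀ k, (q k).natDegree ≤ m) (z : K) (i j : n) :
    (X - C z) ^ m * (U.map C * diagonal (fun k => algebraMap K[X] (RatFunc K) (q k)) *
      V.map C)⁻¹ i j ∈ regularAt z := by
  rw [inv_mul_mul_of_mul_eq_one (map_mul_map_eq_one C hUV),
    inv_diagonal_of_ne_zero fun k => algebraMap_ne_zero (hq k), mul_diagonal_mul_apply,
    Finset.mul_sum]
  refine Subring.sum_mem _ fun k _ => ?_
  simp only [Matrix.map_apply]
  rw [show ∀ a b c d : RatFunc K, a * (b * c⁻¹ * d) = b * d * (a / c)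
    from fun _ _ _ _ => by ring]
  exact mul_mem (mul_mem (C_mem_regularAt z _) (C_mem_regularAt z _))
    (X_sub_C_pow_div_mem_regularAt z (hq k) (hm k))

end RatFunc

open Matrix in
theorem cmat_eq_map_C_mul_diagonal_mul {n : ℕ} {S : Matrix (Fin n) (Fin n) ℝ} (hS : S.IsSymm) :
    ∃ (U V : Matrix (Fin n) (Fin n) ℂ) (μ : Fin n → ℂ), U * V = 1 ∧
      Cmat n S = U.map RatFunc.C *
        diagonal (fun k => algebraMap ℂ[X] (RatFunc ℂ) (X ^ 2 - C (μ k) * X + 1)) *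
          V.map RatFunc.C := by
  obtain ⟨U, V, μ, hUV, rfl⟩ := hS.exists_mul_diagonal_mul
  set ψ : ℝ →+* ℂ := Complex.ofRealHom
  have hmap : (U * diagonal μ * V).map (fun x => RatFunc.C (x : ℂ)) =
      (U.map ψ).map RatFunc.C * diagonal (fun k => RatFunc.C (ψ (μ k))) *
        (V.map ψ).map RatFunc.C := by
    change (U * diagonal μ * V).map (RatFunc.C.comp ψ) = _
    rw [Matrix.map_mul, Matrix.map_mul, diagonal_map (map_zero _), Matrix.map_map, Matrix.map_map]
    rfl
  refine ⟨U.map ψ, V.map ψ, ψ ∘ μ, map_mul_map_eq_one ψ hUV, ?_⟩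
  rw [Cmat, hmap,
    smul_one_sub_smul_mul_diagonal_mul (map_mul_map_eq_one _ (map_mul_map_eq_one ψ hUV))]
  congr
  funext k
  simp only [Function.comp_apply, map_add, map_sub, map_mul, map_pow, map_one,
    RatFunc.algebraMap_X, RatFunc.algebraMap_C]
  ring

theorem cartan_inverse_pole_order_general (n : ℕ)
    (S : Matrix (Fin n) (Fin n) ℝ) (hS : S.IsSymm) :
    IsUnit (Cmat n S) ∧
      ∀ (i j : Fin n) (z : ℂ),
        Polynomial.eval z
            (RatFunc.denom ((RatFunc.X - RatFunc.C z) ^ 2 * (Cmat n S)⁻¹ i j)) ≠ 0 := by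
  obtain ⟨U, V, μ, hUV, hC⟩ := cmat_eq_map_C_mul_diagonal_mul hS
  have hmonic : ∀ k, (X ^ 2 - C (μ k) * X + 1).Monic := fun k => by monicity!
  have hdeg : ∀ k, (X ^ 2 - C (μ k) * X + 1).natDegree ≤ 2 := fun k => by compute_degree!
  rw [hC]
  exact ⟨RatFunc.isUnit_map_C_mul_diagonal_mul hUV fun k => (hmonic k).ne_zero,
    fun i j z => RatFunc.mem_regularAt_iff.mp <| RatFunc.X_sub_C_pow_mul_inv_apply_mem_regularAt
      hUV (fun k => (hmonic k).ne_zero) hdeg z i j⟩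

/-- **Inverse of the deformed Cartan matrix has poles of order at most 2.**
Let `S ∈ Mₙ(ℝ)` be symmetric, `n ≥ 1`.  Then `C(t) = (1+t²) Iₙ - t S` is invertible over
`ℂ(t)`, and for each entry and each `z ∈ ℂ`, the rational function
`(t - z)² (C(t)⁻¹)_{ij}` has no pole at `t = z` (its reduced denominator does not vanish
at `z`). -/
theorem cartan_inverse_pole_order (n : ℕ) (hn : 1 ≤ n)
    (S : Matrix (Fin n) (Fin n) ℝ) (hS : S.IsSymm) :
    IsUnit (Cmat n S) ∧
      ∀ (i j : Fin n) (z : ℂ),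
        Polynomial.eval z
            (RatFunc.denom ((RatFunc.X - RatFunc.C z) ^ 2 * (Cmat n S)⁻¹ i j)) ≠ 0 :=
  cartan_inverse_pole_order_general n S hS

end
end

section
/- Let $p, q \ge 0$ be integers and let $F = \mathbb{Q}(\hbar, u, v_1, \dots, v_p, w_1, \dots, w_q)$ be the field of rational functions in $p+q+2$ independent indeterminates. Then the following identity holds in $F$: $\sum_{k=1}^{p} \frac{\hbar}{u - v_k} \prod_{\substack{1\le i\le p\\ i\ne k}} \frac{v_k - v_i + \hbar}{v_k - v_i} \prod_{i=1}^{q} \frac{v_k - w_i}{v_k - w_i + \hbar} \;-\; \sum_{k=1}^{q} \frac{\hbar}{u - w_k + \hbar} \prod_{\substack{1\le i\le q\\ i\ne k}} \frac{w_k - w_i - \hbar}{w_k - w_i} \prod_{i=1}^{p} \frac{w_k - v_i}{w_k - v_i - \hbar} \;=\; \prod_{i=1}^{p} \frac{u - v_i + \hbar}{u - v_i} \prod_{i=1}^{q} \frac{u - w_i}{u - w_i + \hbar} \;-\; 1$. -/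
/-!
Let `R(u) = ∏ᵢ (u - vᵢ + ℏ)/(u - vᵢ) · ∏ⱼ (u - wⱼ)/(u - wⱼ + ℏ)`. Its numerator and denominator
are monic of the same degree in `u`, and its poles `vᵢ`, `wⱼ - ℏ` are distinct and simple, so
`R - 1` is the sum of its principal parts: Lagrange interpolation of (numerator − denominator)
at the poles. The residue at `v_k` is the `k`-th term of the first sum and the residue at
`w_k - ℏ` is minus the `k`-th term of the second.
-/

noncomputable section

/-- The field `F = ℚ(ℏ, u, v₁, …, v_p, w₁, …, w_q)` of rational functions in `p + q + 2`
independent indeterminates. -/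
abbrev PFField (p q : ℕ) : Type :=
  FractionRing (MvPolynomial (Fin 2 ⊕ (Fin p ⊕ Fin q)) ℚ)

/-- The indeterminates, as elements of `F`. -/
def gen (p q : ℕ) (s : Fin 2 ⊕ (Fin p ⊕ Fin q)) : PFField p q :=
  algebraMap (MvPolynomial (Fin 2 ⊕ (Fin p ⊕ Fin q)) ℚ) (PFField p q) (MvPolynomial.X s)

open Polynomial Finset

theorem Lagrange.prod_div_sub_one_eq_sum_nodalWeight {F ι : Type*} [Field F] [DecidableEq ι]
    {s : Finset ι} {a : ι → F} (b : ι → F) (ha : Set.InjOn a s) {x : F}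
    (hx : ∀ i ∈ s, x ≠ a i) :
    ∏ i ∈ s, (x - b i) / (x - a i) - 1 =
      ∑ k ∈ s, nodalWeight s a k * (x - a k)⁻¹ * ∏ i ∈ s, (a k - b i) := by
  have hdeg : (nodal s b - nodal s a).degree < #s := by
    rw [← degree_nodal (v := b)]
    exact degree_sub_lt_left (by rw [degree_nodal, degree_nodal]) nodal_ne_zero
      (by rw [nodal_monic.leadingCoeff, nodal_monic.leadingCoeff])
  have key := congrArg (eval x) (eq_interpolate ha hdeg)
  rw [eval_interpolate_not_at_node _ hx, eval_sub] at key
  rw [prod_div_distrib, ← eval_nodal, ← eval_nodal, div_sub_one (eval_nodal_not_at_node hx), key,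
    mul_div_cancel_left₀ _ (eval_nodal_not_at_node hx)]
  refine sum_congr rfl fun k hk => ?_
  rw [eval_sub, eval_nodal_at_node hk, sub_zero, eval_nodal]

section SumType

variable {α β M : Type*} [Fintype α] [Fintype β] [DecidableEq α] [DecidableEq β] [CommMonoid M]

theorem Fintype.prod_erase_inl (f : α ⊕ β → M) (k : α) :
    ∏ x ∈ univ.erase (Sum.inl k), f x =
      (∏ i ∈ univ.erase k, f (Sum.inl i)) * ∏ j, f (Sum.inr j) := by
  rw [show univ.erase (Sum.inl k) = (univ.erase k).disjSum (univ : Finset β) by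
    ext x; cases x <;> simp, prod_disjSum]

theorem Fintype.prod_erase_inr (f : α ⊕ β → M) (k : β) :
    ∏ x ∈ univ.erase (Sum.inr k), f x =
      (∏ i, f (Sum.inl i)) * ∏ j ∈ univ.erase k, f (Sum.inr j) := by
  rw [show univ.erase (Sum.inr k) = (univ : Finset α).disjSum (univ.erase k) by
    ext x; cases x <;> simp, prod_disjSum]

end SumType

namespace PartialFraction

variable {K ι κ : Type*} [Field K]

def poles (ℏ : K) (v : ι → K) (w : κ → K) : ι ⊕ κ → K := Sum.elim v fun j => w j - ℏ

def zeros (ℏ : K) (v : ι → K) (w : κ → K) : ι ⊕ κ → K := Sum.elim (fun i => v i - ℏ) w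

theorem poles_injective {ℏ : K} {v : ι → K} {w : κ → K} (hv : Function.Injective v)
    (hw : Function.Injective w) (hvw : ∀ i j, v i - w j + ℏ ≠ 0) :
    Function.Injective (poles ℏ v w) := by
  rintro (i | j) (i' | j') h <;> simp only [poles, Sum.elim_inl, Sum.elim_inr] at h
  · exact congrArg _ (hv h)
  · exact absurd (by rw [h]; ring) (hvw i j')
  · exact absurd (by rw [← h]; ring) (hvw i' j)
  · exact congrArg _ (hw (sub_left_injective h))

variable [Fintype ι] [Fintype κ] [DecidableEq ι] [DecidableEq κ] (ℏ u : K) (v : ι → K) (w : κ → K)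

theorem residue_inl (k : ι) :
    Lagrange.nodalWeight univ (poles ℏ v w) (Sum.inl k) * (u - poles ℏ v w (Sum.inl k))⁻¹ *
        ∏ x, (poles ℏ v w (Sum.inl k) - zeros ℏ v w x) =
      ℏ / (u - v k) * (∏ i ∈ univ.erase k, (v k - v i + ℏ) / (v k - v i)) *
        ∏ j, (v k - w j) / (v k - w j + ℏ) := by
  have hv : ∏ i, (v k - (v i - ℏ)) = ℏ * ∏ i ∈ univ.erase k, (v k - v i + ℏ) := by
    rw [← mul_prod_erase _ _ (mem_univ k), sub_sub_cancel]
    exact congrArg _ (prod_congr rfl fun i _ => (sub_add _ _ _).symm)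
  have hw : ∏ j, (v k - (w j - ℏ)) = ∏ j, (v k - w j + ℏ) :=
    prod_congr rfl fun j _ => (sub_add _ _ _).symm
  simp only [Lagrange.nodalWeight, Fintype.prod_erase_inl, Fintype.prod_sum_type, poles, zeros,
    Sum.elim_inl, Sum.elim_inr, prod_div_distrib, prod_inv_distrib, hv, hw]
  ring

theorem residue_inr (k : κ) :
    Lagrange.nodalWeight univ (poles ℏ v w) (Sum.inr k) * (u - poles ℏ v w (Sum.inr k))⁻¹ *
        ∏ x, (poles ℏ v w (Sum.inr k) - zeros ℏ v w x) =
      -(ℏ / (u - w k + ℏ) * (∏ j ∈ univ.erase k, (w k - w j - ℏ) / (w k - w j)) *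
        ∏ i, (w k - v i) / (w k - v i - ℏ)) := by
  have hw : ∏ j, (w k - ℏ - w j) = -ℏ * ∏ j ∈ univ.erase k, (w k - w j - ℏ) := by
    rw [← mul_prod_erase _ _ (mem_univ k), sub_sub_cancel_left]
    exact congrArg _ (prod_congr rfl fun j _ => sub_right_comm _ _ _)
  have hvv : ∏ i, (w k - ℏ - (v i - ℏ)) = ∏ i, (w k - v i) :=
    prod_congr rfl fun i _ => sub_sub_sub_cancel_right _ _ _
  have hvw : ∏ i, (w k - ℏ - v i) = ∏ i, (w k - v i - ℏ) :=
    prod_congr rfl fun i _ => sub_right_comm _ _ _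
  have hww : ∏ j ∈ univ.erase k, (w k - ℏ - (w j - ℏ)) = ∏ j ∈ univ.erase k, (w k - w j) :=
    prod_congr rfl fun j _ => sub_sub_sub_cancel_right _ _ _
  simp only [Lagrange.nodalWeight, Fintype.prod_erase_inr, Fintype.prod_sum_type, poles, zeros,
    Sum.elim_inl, Sum.elim_inr, prod_div_distrib, prod_inv_distrib, hw, hvv, hvw, hww]
  ring

variable {ℏ u v w}

theorem sum_sub_sum_eq_prod_mul_prod_sub_one (hv : Function.Injective v)
    (hw : Function.Injective w) (hvw : ∀ i j, v i - w j + ℏ ≠ 0) (huv : ∀ i, u - v i ≠ 0)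
    (huw : ∀ j, u - w j + ℏ ≠ 0) :
    (∑ k, ℏ / (u - v k) * (∏ i ∈ univ.erase k, (v k - v i + ℏ) / (v k - v i)) *
        ∏ i, (v k - w i) / (v k - w i + ℏ)) -
      (∑ k, ℏ / (u - w k + ℏ) * (∏ i ∈ univ.erase k, (w k - w i - ℏ) / (w k - w i)) *
        ∏ i, (w k - v i) / (w k - v i - ℏ)) =
      (∏ i, (u - v i + ℏ) / (u - v i)) * (∏ i, (u - w i) / (u - w i + ℏ)) - 1 := by
  have hu : ∀ x ∈ univ, u ≠ poles ℏ v w x := by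
    rintro (i | j) -
    · exact sub_ne_zero.1 (huv i)
    · exact sub_ne_zero.1 (by rw [poles, Sum.elim_inr, ← sub_add]; exact huw j)
  have key := Lagrange.prod_div_sub_one_eq_sum_nodalWeight (zeros ℏ v w)
    (poles_injective hv hw hvw).injOn hu
  simp only [Fintype.sum_sum_type, residue_inl, residue_inr, sum_neg_distrib] at key
  simp only [Fintype.prod_sum_type, poles, zeros, Sum.elim_inl, Sum.elim_inr, ← sub_add] at key
  rw [key, sub_eq_add_neg]

end PartialFraction

theorem gen_injective (p q : ℕ) : Function.Injective (gen p q) :=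
  (IsFractionRing.injective _ _).comp MvPolynomial.X_injective

theorem gen_sub_gen_add_gen_ne_zero {p q : ℕ} {s t h : Fin 2 ⊕ (Fin p ⊕ Fin q)} (hst : s ≠ t)
    (hsh : s ≠ h) : gen p q s - gen p q t + gen p q h ≠ 0 := by
  classical
  rw [gen, gen, gen, ← map_sub, ← map_add, ne_eq,
    IsFractionRing.to_map_eq_zero_iff (K := PFField p q)]
  intro h0
  simpa [hst.symm, hsh.symm] using congrArg (MvPolynomial.eval (Pi.single s 1)) h0

/-- **A partial fraction identity.**  In `F = ℚ(ℏ, u, v₁, …, v_p, w₁, …, w_q)`,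
`∑_k (ℏ/(u-v_k)) ∏_{i≠k} ((v_k-v_i+ℏ)/(v_k-v_i)) ∏_i ((v_k-w_i)/(v_k-w_i+ℏ))`
`− ∑_k (ℏ/(u-w_k+ℏ)) ∏_{i≠k} ((w_k-w_i-ℏ)/(w_k-w_i)) ∏_i ((w_k-v_i)/(w_k-v_i-ℏ))`
`= ∏_i ((u-v_i+ℏ)/(u-v_i)) ∏_i ((u-w_i)/(u-w_i+ℏ)) − 1`. -/
theorem partial_fraction_identity (p q : ℕ) :
    (∑ k : Fin p,
        gen p q (Sum.inl 0) / (gen p q (Sum.inl 1) - gen p q (Sum.inr (Sum.inl k))) *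
          (∏ i ∈ Finset.univ.erase k,
            (gen p q (Sum.inr (Sum.inl k)) - gen p q (Sum.inr (Sum.inl i)) +
                gen p q (Sum.inl 0)) /
              (gen p q (Sum.inr (Sum.inl k)) - gen p q (Sum.inr (Sum.inl i)))) *
          (∏ i : Fin q,
            (gen p q (Sum.inr (Sum.inl k)) - gen p q (Sum.inr (Sum.inr i))) /
              (gen p q (Sum.inr (Sum.inl k)) - gen p q (Sum.inr (Sum.inr i)) +
                gen p q (Sum.inl 0)))) -
      (∑ k : Fin q,
          gen p q (Sum.inl 0) /
              (gen p q (Sum.inl 1) - gen p q (Sum.inr (Sum.inr k)) + gen p q (Sum.inl 0)) *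
            (∏ i ∈ Finset.univ.erase k,
              (gen p q (Sum.inr (Sum.inr k)) - gen p q (Sum.inr (Sum.inr i)) -
                  gen p q (Sum.inl 0)) /
                (gen p q (Sum.inr (Sum.inr k)) - gen p q (Sum.inr (Sum.inr i)))) *
            (∏ i : Fin p,
              (gen p q (Sum.inr (Sum.inr k)) - gen p q (Sum.inr (Sum.inl i))) /
                (gen p q (Sum.inr (Sum.inr k)) - gen p q (Sum.inr (Sum.inl i)) -
                  gen p q (Sum.inl 0))))
      = (∏ i : Fin p,
            (gen p q (Sum.inl 1) - gen p q (Sum.inr (Sum.inl i)) + gen p q (Sum.inl 0)) /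
              (gen p q (Sum.inl 1) - gen p q (Sum.inr (Sum.inl i)))) *
          (∏ i : Fin q,
            (gen p q (Sum.inl 1) - gen p q (Sum.inr (Sum.inr i))) /
              (gen p q (Sum.inl 1) - gen p q (Sum.inr (Sum.inr i)) + gen p q (Sum.inl 0)))
        - 1 := by
  exact PartialFraction.sum_sub_sum_eq_prod_mul_prod_sub_one
    ((gen_injective p q).comp (Sum.inr_injective.comp Sum.inl_injective))
    ((gen_injective p q).comp (Sum.inr_injective.comp Sum.inr_injective))
    (fun _ _ => gen_sub_gen_add_gen_ne_zero (by simp) (by simp))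
    (fun _ => sub_ne_zero.2 ((gen_injective p q).ne (by simp)))
    (fun _ => gen_sub_gen_add_gen_ne_zero (by simp) (by simp))


end
end

section
/- Let $K$ be a field of characteristic zero and let $F = K[p_1, p_2, \dots]$, $F' \otimes F'' := K[p'_1,p'_2,\dots]\otimes_K K[p''_1,p''_2,\dots]$. Equip $F$ with the unique symmetric bilinear form with $\langle 1,1\rangle = 1$ and $\langle p_n x, y\rangle = \langle x, n\,\partial y/\partial p_n\rangle$ for all $n > 0$, and equip $F\otimes F$ with the product form. Let $\Theta : K[p^+_1,p^+_2,\dots]\otimes K[p^-_1,p^-_2,\dots] \to F\otimes F$ be the algebra isomorphism with $\Theta(p^+_n) = p'_n + p''_n$ and $\Theta(p^-_n) = p'_n - p''_n$. Suppose $B$ is any $K$-linear endomorphism of $K[p^-_1,p^-_2,\dots]$ and set $A := \Theta\circ(\mathrm{id}\otimes B)\circ\Theta^{-1} \in \mathrm{End}_K(F\otimes F)$. If $\langle A(1\otimes v_1),\; 1\otimes v_2\rangle = 0$ for all $v_1, v_2 \in F$, then $A = 0$. In other words, an operator acting only on the antidiagonal Heisenberg factor $F^-$ of $F\otimes F$ is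 uniquely determined by its matrix elements on the vacuum sector $1\otimes F$. -/
/-!
Let `Pₙ = p'ₙ + p''ₙ = Θ(p⁺ₙ)` and `Dₙ = α'ₙ + α''ₙ` on `F ⊗ F`. For the product form, `Dₙ` is
adjoint to multiplication by `Pₙ`, and `Dₙ ∘ Θ = Θ ∘ (2αₙ ⊗ 1)` because both sides are
`Θ`-twisted derivations that agree on generators. Hence `A`, which acts only on the factor `F⁻`,
commutes with `Pₙ` and with `Dₙ`. Since `F ⊗ F` is generated from the vacuum sector `1 ⊗ F` by the
`Pₙ`, and `Dₙ` preserves `1 ⊗ F`, the form `⟨A z, w⟩` vanishes first for `w ∈ 1 ⊗ F` and then for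
all `w`. The monomials are an orthogonal basis of `F` with nonzero norms, so the product form is
nondegenerate, and `A = 0`.
-/

open scoped TensorProduct

noncomputable section

/-- The rank-one Fock space `F = K[p₁, p₂, …]`. -/
abbrev FockSp (K : Type*) [Field K] : Type _ := MvPolynomial ℕ+ K

open MvPolynomial

theorem Finsupp.induction_single_one {σ : Type*} {p : (σ →₀ ℕ) → Prop} (m : σ →₀ ℕ)
    (zero : p 0) (step : ∀ i m, p m → p (single i 1 + m)) : p m := by
  induction m using Finsupp.induction with
  | zero => exact zero
  | single_add i k m _ hk hm =>
    clear hk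
    induction k with
    | zero => simpa using hm
    | succ k ih => rw [add_comm k, Finsupp.single_add, add_assoc]; exact step i _ ih

theorem LinearMap.rTensor_mulLeft {R A B : Type*} [CommSemiring R] [Semiring A] [Semiring B]
    [Algebra R A] [Algebra R B] (a : A) :
    (LinearMap.mulLeft R a).rTensor B = LinearMap.mulLeft R (a ⊗ₜ[R] (1 : B)) := by
  rw [LinearMap.mulLeft_tmul, LinearMap.mulLeft_one]
  rfl

theorem LinearEquiv.conj_lTensor_commute {R M N V : Type*} [CommRing R] [AddCommGroup M]
    [Module R M] [AddCommGroup N] [Module R N] [AddCommGroup V] [Module R V]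
    (e : M ⊗[R] N ≃ₗ[R] V) (C : Module.End R N) {T : Module.End R V} {f : Module.End R M}
    (hT : ∀ x, T (e x) = e (f.rTensor N x)) : Commute (e.conj (C.lTensor M)) T := by
  refine LinearMap.ext fun z => ?_
  obtain ⟨x, rfl⟩ := e.surjective z
  have hfC : C.lTensor M (f.rTensor N x) = f.rTensor N (C.lTensor M x) := by
    rw [← LinearMap.comp_apply, LinearMap.lTensor_comp_rTensor, ← LinearMap.rTensor_comp_lTensor,
      LinearMap.comp_apply]
  simp [LinearEquiv.conj_apply, hT, hfC]

namespace LinearMap.IsAdjointPair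

variable {R M : Type*} [CommRing R] [AddCommGroup M] [Module R M] {B : M →ₗ[R] M →ₗ[R] R}

theorem swap (hB : ∀ x y, B x y = B y x) {f g : M → M} (h : IsAdjointPair B B f g) :
    IsAdjointPair B B g f := fun x y => by
  rw [hB, ← h, hB]

theorem comp_of_commute {f : Module.End R M} {g : M → M} (h : IsAdjointPair B B f g)
    {A : Module.End R M} (hA : Commute A f) : IsAdjointPair (B ∘ₗ A) (B ∘ₗ A) f g := fun x y => by
  rw [LinearMap.comp_apply, LinearMap.comp_apply, ← Module.End.mul_apply, hA.eq,
    Module.End.mul_apply, h]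

end LinearMap.IsAdjointPair

section TensorProductForm

variable {R M N : Type*} [CommRing R] [AddCommGroup M] [Module R M] [AddCommGroup N] [Module R N]
  {B₁ : M →ₗ[R] M →ₗ[R] R} {B₁' : N →ₗ[R] N →ₗ[R] R} {B : M ⊗[R] N →ₗ[R] M ⊗[R] N →ₗ[R] R}

theorem separatingLeft_of_tmul [IsDomain R] {ι κ : Type*}
    (hB : ∀ x y x' y', B (x ⊗ₜ y) (x' ⊗ₜ y') = B₁ x x' * B₁' y y')
    {v : Module.Basis ι R M} {v' : Module.Basis κ R N} (hv : B₁.IsOrthoᵢ v)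
    (hv' : B₁'.IsOrthoᵢ v') (hvv : ∀ i, B₁ (v i) (v i) ≠ 0) (hvv' : ∀ j, B₁' (v' j) (v' j) ≠ 0) :
    B.SeparatingLeft := by
  refine LinearMap.IsOrthoᵢ.separatingLeft_of_not_isOrtho_basis_self (v.tensorProduct v') ?_ ?_
  · rintro ⟨i, j⟩ ⟨i', j'⟩ h
    show B _ _ = 0
    simp only [Module.Basis.tensorProduct_apply, hB]
    rw [Ne, Prod.mk.injEq, not_and_or] at h
    obtain h | h := h
    · rw [hv h, zero_mul]
    · rw [hv' h, mul_zero]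
  · rintro ⟨i, j⟩
    simp only [Module.Basis.tensorProduct_apply, hB]
    exact mul_ne_zero (hvv i) (hvv' j)

theorem apply_comm_of_tmul (hB : ∀ x y x' y', B (x ⊗ₜ y) (x' ⊗ₜ y') = B₁ x x' * B₁' y y')
    (hB₁ : ∀ x y, B₁ x y = B₁ y x) (hB₁' : ∀ x y, B₁' x y = B₁' y x) (z w : M ⊗[R] N) :
    B z w = B w z := by
  have : B.flip = B := TensorProduct.ext' fun x y => TensorProduct.ext' fun x' y' => by
    simp only [LinearMap.flip_apply, hB, hB₁ x', hB₁' y']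
  exact LinearMap.congr_fun₂ this w z

theorem isAdjointPair_map_of_tmul (hB : ∀ x y x' y', B (x ⊗ₜ y) (x' ⊗ₜ y') = B₁ x x' * B₁' y y')
    {f g : M →ₗ[R] M} {f' g' : N →ₗ[R] N} (h : LinearMap.IsAdjointPair B₁ B₁ f g)
    (h' : LinearMap.IsAdjointPair B₁' B₁' f' g') :
    LinearMap.IsAdjointPair B B (TensorProduct.map f f') (TensorProduct.map g g') := by
  have : B ∘ₗ TensorProduct.map f f' = B.compl₂ (TensorProduct.map g g') :=
    TensorProduct.ext' fun x y => TensorProduct.ext' fun x' y' => by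
      simp [hB, h x x', h' y y']
  exact LinearMap.congr_fun₂ this

end TensorProductForm

namespace Derivation

variable {R A B : Type*} [CommRing R] [CommRing A] [CommRing B] [Algebra R A] [Algebra R B]

def tensorProduct (d₁ : Derivation R A A) (d₂ : Derivation R B B) :
    Derivation R (A ⊗[R] B) (A ⊗[R] B) :=
  Derivation.mk' (d₁.toLinearMap.rTensor B + d₂.toLinearMap.lTensor A) fun z w => by
    induction z using TensorProduct.induction_on with
    | zero => simp
    | add z z' hz hz' => simp only [add_mul, map_add, hz, hz', smul_eq_mul]; ring
    | tmul a b =>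
      induction w using TensorProduct.induction_on with
      | zero => simp
      | add w w' hw hw' => simp only [mul_add, map_add, hw, hw', smul_eq_mul]; ring
      | tmul a' b' =>
        simp only [Algebra.TensorProduct.tmul_mul_tmul, LinearMap.add_apply,
          LinearMap.rTensor_tmul, LinearMap.lTensor_tmul, coeFn_coe, leibniz, smul_eq_mul,
          TensorProduct.add_tmul, TensorProduct.tmul_add, mul_add]
        simp only [mul_comm]
        abel

theorem tensorProduct_apply (d₁ : Derivation R A A) (d₂ : Derivation R B B) (z : A ⊗[R] B) :
    d₁.tensorProduct d₂ z = d₁.toLinearMap.rTensor B z + d₂.toLinearMap.lTensor A z := rfl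

@[simp]
theorem tensorProduct_tmul (d₁ : Derivation R A A) (d₂ : Derivation R B B) (a : A) (b : B) :
    d₁.tensorProduct d₂ (a ⊗ₜ b) = d₁ a ⊗ₜ b + a ⊗ₜ d₂ b := rfl

end Derivation

namespace MvPolynomial

theorem monomial_single_one_add {σ R : Type*} [CommSemiring R] (i : σ) (m : σ →₀ ℕ) (r : R) :
    monomial (Finsupp.single i 1 + m) r = X i * monomial m r := by
  rw [monomial_single_add, pow_one]

theorem exists_smul_pderiv_X_eq_C {σ R : Type*} [CommRing R] (c : R) (i j : σ) :
    ∃ r, (c • pderiv i : Derivation R (MvPolynomial σ R) (MvPolynomial σ R)) (X j) = C r := by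
  by_cases h : j = i
  · exact ⟨c, by simp [h, smul_eq_C_mul]⟩
  · exact ⟨0, by simp [pderiv_X_of_ne h]⟩

section FockForm

variable {σ R : Type*} [CommRing R] {w : σ → R}
  {Bf : MvPolynomial σ R →ₗ[R] MvPolynomial σ R →ₗ[R] R}

theorem bilin_X_mul_monomial (hadj : ∀ i x y, Bf (X i * x) y = Bf x (w i • pderiv i y))
    (i : σ) (m m' : σ →₀ ℕ) :
    Bf (X i * monomial m 1) (monomial m' 1)
      = w i * m' i * Bf (monomial m 1) (monomial (m' - Finsupp.single i 1) 1) := by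
  rw [hadj, pderiv_monomial, one_mul, ← mul_one ((m' i : R)), ← smul_eq_mul, ← smul_monomial,
    smul_smul, map_smul, smul_eq_mul, smul_eq_mul, mul_one]

variable [IsDomain R] [CharZero R] (hw : ∀ i, w i ≠ 0) (hsymm : ∀ x y, Bf x y = Bf y x)
  (h11 : Bf 1 1 = 1) (hadj : ∀ i x y, Bf (X i * x) y = Bf x (w i • pderiv i y))
include hw hsymm h11 hadj

theorem bilin_monomial_ne_zero_iff (m m' : σ →₀ ℕ) :
    Bf (monomial m 1) (monomial m' 1) ≠ 0 ↔ m = m' := by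
  induction m using Finsupp.induction_single_one generalizing m' with
  | zero =>
    induction m' using Finsupp.induction_single_one with
    | zero => simp [h11]
    | step i m' _ =>
      rw [hsymm, monomial_single_one_add, bilin_X_mul_monomial hadj]
      simp [eq_comm (a := (0 : σ →₀ ℕ))]
  | step i m ih =>
    rw [monomial_single_one_add, bilin_X_mul_monomial hadj]
    by_cases hi : m' i = 0
    · have : Finsupp.single i 1 + m ≠ m' := fun h => by simp [← h] at hi
      simp [hi, this]
    · have hle : Finsupp.single i 1 ≤ m' :=
        Finsupp.single_le_iff.2 (Nat.one_le_iff_ne_zero.2 hi)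
      rw [mul_ne_zero_iff, ih, eq_tsub_iff_add_eq_of_le hle, add_comm]
      simp [hw i, hi]

theorem isOrthoᵢ_basisMonomials : Bf.IsOrthoᵢ (basisMonomials σ R) := fun m m' h => by
  simpa [coe_basisMonomials] using (bilin_monomial_ne_zero_iff hw hsymm h11 hadj m m').not.2 h

theorem bilin_basisMonomials_self_ne_zero (m : σ →₀ ℕ) :
    Bf (basisMonomials σ R m) (basisMonomials σ R m) ≠ 0 := by
  simpa [coe_basisMonomials] using (bilin_monomial_ne_zero_iff hw hsymm h11 hadj m m).2 rfl

end FockForm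

section TwistedDerivation

variable {σ τ R S : Type*} [CommRing R] [CommRing S] [Algebra R S]

theorem map_one_eq_zero_of_leibniz {A : Type*} [Semiring A] [Algebra R A] {φ : A →ₐ[R] S}
    {D : A →ₗ[R] S} (hD : ∀ a b, D (a * b) = φ a * D b + φ b * D a) : D 1 = 0 := by
  simpa using hD 1 1

theorem linearMap_ext_of_leibniz {φ : MvPolynomial σ R →ₐ[R] S}
    {D₁ D₂ : MvPolynomial σ R →ₗ[R] S}
    (h₁ : ∀ a b, D₁ (a * b) = φ a * D₁ b + φ b * D₁ a)
    (h₂ : ∀ a b, D₂ (a * b) = φ a * D₂ b + φ b * D₂ a)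
    (hX : ∀ i, D₁ (X i) = D₂ (X i)) : D₁ = D₂ := by
  refine LinearMap.ext fun p => ?_
  induction p using MvPolynomial.induction_on with
  | C r =>
    rw [← mul_one (C r), ← smul_eq_C_mul, map_smul, map_smul,
      map_one_eq_zero_of_leibniz h₁, map_one_eq_zero_of_leibniz h₂]
  | add p q hp hq => rw [map_add, map_add, hp, hq]
  | mul_X p i hp => rw [h₁, h₂, hp, hX]

theorem tensorProduct_linearMap_ext_of_leibniz
    {φ : MvPolynomial σ R ⊗[R] MvPolynomial τ R →ₐ[R] S}
    {D₁ D₂ : MvPolynomial σ R ⊗[R] MvPolynomial τ R →ₗ[R] S}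
    (h₁ : ∀ a b, D₁ (a * b) = φ a * D₁ b + φ b * D₁ a)
    (h₂ : ∀ a b, D₂ (a * b) = φ a * D₂ b + φ b * D₂ a)
    (hl : ∀ i, D₁ (X i ⊗ₜ 1) = D₂ (X i ⊗ₜ 1)) (hr : ∀ j, D₁ (1 ⊗ₜ X j) = D₂ (1 ⊗ₜ X j)) :
    D₁ = D₂ := by
  have hL := linearMap_ext_of_leibniz (φ := φ.comp Algebra.TensorProduct.includeLeft)
    (D₁ := D₁ ∘ₗ Algebra.TensorProduct.includeLeft.toLinearMap)
    (D₂ := D₂ ∘ₗ Algebra.TensorProduct.includeLeft.toLinearMap)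
    (fun a b => by simpa using h₁ (a ⊗ₜ 1) (b ⊗ₜ 1))
    (fun a b => by simpa using h₂ (a ⊗ₜ 1) (b ⊗ₜ 1)) hl
  have hR := linearMap_ext_of_leibniz (φ := φ.comp Algebra.TensorProduct.includeRight)
    (D₁ := D₁ ∘ₗ Algebra.TensorProduct.includeRight.toLinearMap)
    (D₂ := D₂ ∘ₗ Algebra.TensorProduct.includeRight.toLinearMap)
    (fun a b => by simpa using h₁ (1 ⊗ₜ a) (1 ⊗ₜ b))
    (fun a b => by simpa using h₂ (1 ⊗ₜ a) (1 ⊗ₜ b)) hr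
  refine TensorProduct.ext' fun a b => ?_
  rw [← mul_one a, ← one_mul b, ← Algebra.TensorProduct.tmul_mul_tmul, h₁, h₂]
  simpa using congr(φ (a ⊗ₜ 1) * $hR b + φ (1 ⊗ₜ b) * $hL a)

end TwistedDerivation

section DoubleFockSpace

variable {σ R : Type*} [CommRing R]

def diagX (i : σ) : MvPolynomial σ R ⊗[R] MvPolynomial σ R := X i ⊗ₜ 1 + 1 ⊗ₜ X i

theorem mulLeft_diagX (i : σ) :
    LinearMap.mulLeft R (diagX (R := R) i)
      = (LinearMap.mulLeft R (X i)).rTensor _ + (LinearMap.mulLeft R (X i)).lTensor _ := by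
  refine TensorProduct.ext' fun a b => ?_
  simp [diagX, add_mul, Algebra.TensorProduct.tmul_mul_tmul]

theorem submodule_eq_top_of_one_tmul_mem
    (S : Submodule R (MvPolynomial σ R ⊗[R] MvPolynomial σ R))
    (h_one : ∀ v, 1 ⊗ₜ v ∈ S) (h_diagX : ∀ i z, z ∈ S → diagX i * z ∈ S) : S = ⊤ := by
  have h_tmul : ∀ a b, a ⊗ₜ b ∈ S := by
    intro a
    induction a using MvPolynomial.induction_on with
    | C r =>
      intro b
      rw [C_eq_smul_one, ← TensorProduct.smul_tmul']
      exact S.smul_mem r (h_one b)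
    | add p q hp hq => intro b; rw [TensorProduct.add_tmul]; exact S.add_mem (hp b) (hq b)
    | mul_X p i hp =>
      intro b
      have : (p * X i) ⊗ₜ b = diagX i * (p ⊗ₜ b) - p ⊗ₜ (X i * b) := by
        rw [diagX, add_mul, Algebra.TensorProduct.tmul_mul_tmul,
          Algebra.TensorProduct.tmul_mul_tmul, one_mul, one_mul, mul_comm p, add_sub_cancel_right]
      rw [this]
      exact S.sub_mem (h_diagX i _ (hp b)) (hp _)
  exact eq_top_iff.2 fun z _ => TensorProduct.induction_on z S.zero_mem h_tmul fun _ _ => S.add_mem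

theorem isAdjointPair_mulLeft_diagX {Bf : MvPolynomial σ R →ₗ[R] MvPolynomial σ R →ₗ[R] R}
    {B : MvPolynomial σ R ⊗[R] MvPolynomial σ R →ₗ[R]
      MvPolynomial σ R ⊗[R] MvPolynomial σ R →ₗ[R] R}
    (hB : ∀ x y x' y', B (x ⊗ₜ y) (x' ⊗ₜ y') = Bf x x' * Bf y y') (i : σ)
    (d : Derivation R (MvPolynomial σ R) (MvPolynomial σ R))
    (hd : ∀ x y, Bf (X i * x) y = Bf x (d y)) :
    LinearMap.IsAdjointPair B B (LinearMap.mulLeft R (diagX i)) (d.tensorProduct d) := by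
  have hX : LinearMap.IsAdjointPair Bf Bf (LinearMap.mulLeft R (X i)) d := hd
  have hid : LinearMap.IsAdjointPair Bf Bf (LinearMap.id : MvPolynomial σ R →ₗ[R] _)
      (LinearMap.id : MvPolynomial σ R →ₗ[R] _) := fun _ _ => rfl
  rw [mulLeft_diagX]
  exact (isAdjointPair_map_of_tmul hB hX hid).add (isAdjointPair_map_of_tmul hB hid hX)

theorem bilin_eq_zero_of_one_tmul (d : σ → Derivation R (MvPolynomial σ R) (MvPolynomial σ R))
    {β : MvPolynomial σ R ⊗[R] MvPolynomial σ R →ₗ[R]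
      MvPolynomial σ R ⊗[R] MvPolynomial σ R →ₗ[R] R}
    (hl : ∀ i, LinearMap.IsAdjointPair β β (LinearMap.mulLeft R (diagX i))
      ((d i).tensorProduct (d i)))
    (hr : ∀ i, LinearMap.IsAdjointPair β β ((d i).tensorProduct (d i))
      (LinearMap.mulLeft R (diagX i)))
    (h_one : ∀ v v', β (1 ⊗ₜ v) (1 ⊗ₜ v') = 0) : β = 0 := by
  have h_vac : ∀ z v, β z (1 ⊗ₜ v) = 0 := by
    have := submodule_eq_top_of_one_tmul_mem (⨅ v, LinearMap.ker (β.flip (1 ⊗ₜ v)))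
      (fun v => by simp [h_one]) fun i z hz => by
        simp only [Submodule.mem_iInf, LinearMap.mem_ker, LinearMap.flip_apply] at hz ⊢
        intro v
        rw [← LinearMap.mulLeft_apply (R := R), hl i, Derivation.tensorProduct_tmul,
          Derivation.map_one_eq_zero, TensorProduct.zero_tmul, zero_add]
        exact hz _
    intro z v
    simpa using (Submodule.mem_iInf _).1 ((Submodule.eq_top_iff'.1 this) z) v
  have := submodule_eq_top_of_one_tmul_mem (⨅ z, LinearMap.ker (β z))
    (fun v => by simp [h_vac]) fun i w hw => by
      simp only [Submodule.mem_iInf, LinearMap.mem_ker] at hw ⊢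
      intro z
      rw [← LinearMap.mulLeft_apply (R := R), ← hr i]
      exact hw _
  refine LinearMap.ext fun z => LinearMap.ext fun w => ?_
  simpa using (Submodule.mem_iInf _).1 ((Submodule.eq_top_iff'.1 this) w) z

theorem tensorProduct_self_map_apply
    (Θ : MvPolynomial σ R ⊗[R] MvPolynomial σ R →ₐ[R] MvPolynomial σ R ⊗[R] MvPolynomial σ R)
    (hΘp : ∀ i, Θ (X i ⊗ₜ 1) = X i ⊗ₜ 1 + 1 ⊗ₜ X i)
    (hΘm : ∀ i, Θ (1 ⊗ₜ X i) = X i ⊗ₜ 1 - 1 ⊗ₜ X i)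
    (d : Derivation R (MvPolynomial σ R) (MvPolynomial σ R)) (hd : ∀ i, ∃ r, d (X i) = C r)
    (z : MvPolynomial σ R ⊗[R] MvPolynomial σ R) :
    d.tensorProduct d (Θ z)
      = Θ (((2 : R) • (d : MvPolynomial σ R →ₗ[R] MvPolynomial σ R)).rTensor _ z) := by
  have hCl : ∀ r : R, (C r ⊗ₜ 1 : MvPolynomial σ R ⊗[R] MvPolynomial σ R) = algebraMap R _ r :=
    fun r => rfl
  have hCr : ∀ r : R, (1 ⊗ₜ C r : MvPolynomial σ R ⊗[R] MvPolynomial σ R) = algebraMap R _ r := by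
    intro r
    rw [← hCl, C_eq_smul_one, TensorProduct.smul_tmul]
  have key := tensorProduct_linearMap_ext_of_leibniz (φ := Θ)
    (D₁ := (d.tensorProduct d : _ →ₗ[R] _) ∘ₗ Θ.toLinearMap)
    (D₂ := Θ.toLinearMap ∘ₗ
      (((2 : R) • d).tensorProduct (0 : Derivation R (MvPolynomial σ R) _) : _ →ₗ[R] _))
    (fun a b => by simp [Derivation.leibniz])
    (fun a b => by simp [Derivation.leibniz])
    (fun i => by
      obtain ⟨r, hr⟩ := hd i
      simp only [LinearMap.coe_comp, Derivation.coeFn_coe, AlgHom.coe_toLinearMap,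
        Function.comp_apply, hΘp, map_add, Derivation.tensorProduct_tmul, hr,
        Derivation.map_one_eq_zero, TensorProduct.tmul_zero, add_zero, TensorProduct.zero_tmul,
        zero_add, Derivation.coe_smul, Pi.smul_apply]
      rw [hCl, hCr, ← TensorProduct.smul_tmul', hCl, map_smul, AlgHom.commutes, two_smul])
    (fun i => by
      obtain ⟨r, hr⟩ := hd i
      simp only [LinearMap.coe_comp, Derivation.coeFn_coe, AlgHom.coe_toLinearMap,
        Function.comp_apply, hΘm, map_sub, Derivation.tensorProduct_tmul, hr,
        Derivation.map_one_eq_zero, TensorProduct.tmul_zero, add_zero, TensorProduct.zero_tmul,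
        zero_add, Derivation.coe_zero, Pi.zero_apply, map_zero]
      rw [hCl, hCr, sub_self])
  simpa [Derivation.tensorProduct_apply] using LinearMap.congr_fun key z

end DoubleFockSpace

end MvPolynomial

/-- **Operators on the antidiagonal factor are determined by vacuum matrix elements.**
Let `K` be a field of characteristic zero and `F = K[p₁, p₂, …]`.  Let `Bf` be the unique
symmetric bilinear form on `F` with `⟨1,1⟩ = 1` and `⟨pₙ x, y⟩ = ⟨x, n ∂y/∂pₙ⟩`, and let
`B₂` be the product form on `F ⊗ F`.  Let `Θ : K[p⁺] ⊗ K[p⁻] → F ⊗ F` be the algebra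
isomorphism with `Θ(p⁺ₙ) = p'ₙ + p''ₙ` and `Θ(p⁻ₙ) = p'ₙ - p''ₙ`.  For a linear
endomorphism `C` of `K[p⁻]`, set `A = Θ ∘ (id ⊗ C) ∘ Θ⁻¹`.  If
`⟨A(1 ⊗ v₁), 1 ⊗ v₂⟩ = 0` for all `v₁, v₂ ∈ F`, then `A = 0`. -/
theorem antidiagonal_operator_vacuum_determined {K : Type*} [Field K] [CharZero K]
    (Bf : FockSp K →ₗ[K] FockSp K →ₗ[K] K)
    (hsymm : ∀ x y, Bf x y = Bf y x)
    (h11 : Bf 1 1 = 1)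
    (hadj : ∀ (n : ℕ+) (x y : FockSp K),
      Bf (MvPolynomial.X n * x) y = Bf x (((n : ℕ) : K) • MvPolynomial.pderiv n y))
    (B₂ : (FockSp K ⊗[K] FockSp K) →ₗ[K] (FockSp K ⊗[K] FockSp K) →ₗ[K] K)
    (hB₂ : ∀ x y x' y' : FockSp K,
      B₂ (x ⊗ₜ[K] y) (x' ⊗ₜ[K] y') = Bf x x' * Bf y y')
    (Θ : (FockSp K ⊗[K] FockSp K) ≃ₐ[K] (FockSp K ⊗[K] FockSp K))
    (hΘp : ∀ n : ℕ+,
      Θ (MvPolynomial.X n ⊗ₜ[K] 1) = MvPolynomial.X n ⊗ₜ[K] 1 + 1 ⊗ₜ[K] MvPolynomial.X n)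
    (hΘm : ∀ n : ℕ+,
      Θ (1 ⊗ₜ[K] MvPolynomial.X n) = MvPolynomial.X n ⊗ₜ[K] 1 - 1 ⊗ₜ[K] MvPolynomial.X n)
    (C : FockSp K →ₗ[K] FockSp K)
    (A : (FockSp K ⊗[K] FockSp K) →ₗ[K] (FockSp K ⊗[K] FockSp K))
    (hA : A = Θ.toLinearMap ∘ₗ LinearMap.lTensor (FockSp K) C ∘ₗ Θ.symm.toLinearMap)
    (hvac : ∀ v₁ v₂ : FockSp K, B₂ (A (1 ⊗ₜ[K] v₁)) (1 ⊗ₜ[K] v₂) = 0) :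
    A = 0 := by
  let α : ℕ+ → Derivation K (FockSp K) (FockSp K) := fun n => ((n : ℕ) : K) • pderiv n
  have hw : ∀ n : ℕ+, ((n : ℕ) : K) ≠ 0 := fun n => Nat.cast_ne_zero.2 n.ne_zero
  have hsep : B₂.SeparatingLeft := separatingLeft_of_tmul hB₂
    (isOrthoᵢ_basisMonomials hw hsymm h11 hadj) (isOrthoᵢ_basisMonomials hw hsymm h11 hadj)
    (bilin_basisMonomials_self_ne_zero hw hsymm h11 hadj)
    (bilin_basisMonomials_self_ne_zero hw hsymm h11 hadj)
  have hadj₂ (n : ℕ+) := isAdjointPair_mulLeft_diagX hB₂ n (α n) (hadj n)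
  have hA' : A = Θ.toLinearEquiv.conj (C.lTensor _) := by rw [hA, LinearEquiv.conj_apply]; rfl
  have hA_diagX (n : ℕ+) : Commute A (LinearMap.mulLeft K (diagX n)) := by
    rw [hA']
    refine Θ.toLinearEquiv.conj_lTensor_commute C (f := LinearMap.mulLeft K (X n)) fun x => ?_
    simp [LinearMap.rTensor_mulLeft, diagX, hΘp]
  have hA_α (n : ℕ+) : Commute A ((α n).tensorProduct (α n)) := by
    rw [hA']
    exact Θ.toLinearEquiv.conj_lTensor_commute C
      (tensorProduct_self_map_apply Θ.toAlgHom hΘp hΘm (α n) (exists_smul_pderiv_X_eq_C _ n))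
  have hβ : B₂ ∘ₗ A = 0 := bilin_eq_zero_of_one_tmul α
    (fun n => (hadj₂ n).comp_of_commute (hA_diagX n))
    (fun n => ((hadj₂ n).swap (apply_comm_of_tmul hB₂ hsymm hsymm)).comp_of_commute (hA_α n))
    hvac
  exact LinearMap.ext fun z => hsep (A z) fun w => LinearMap.congr_fun₂ hβ z w

end
end

section
/- Let $K$ be a field of characteristic zero. On $F = K[p_1,p_2,\dots]$ define $\Phi_2 := \sum_{n>0} n\, p_n\,\partial/\partial p_n$ and $\Omega := \sum_{n>0} n^2\, p_n\,\partial/\partial p_n$. On $F\otimes F = K[p'_1,p'_2,\dots]\otimes K[p''_1,p''_2,\dots]$ define $\Phi_2^- := \sum_{n>0} n\,(p'_n - p''_n)\,\big(\partial/\partial p'_n - \partial/\partial p''_n\big)$, and let $P^{(1)} := \pi\otimes\mathrm{id}_F$, where $\pi : F \to F$ sends a polynomial to its constant term. Then for every $v \in F$: $P^{(1)}\Big(\big(\Phi_2^-\big)^2 (1\otimes v)\Big) \;=\; 1\otimes\big(\Phi_2^2 + \Omega\big) v$; i.e., compressing the square of the antidiagonal operator $\Phi_2^-$ to the vacuum sector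 of the first factor produces, besides $\Phi_2^2$, the extra operator $\Omega$. -/
/-!
Vacuum compression of the square of the antidiagonal operator `Φ₂⁻` on the double Fock
space produces `Φ₂² + Ω`:  `P⁽¹⁾ ((Φ₂⁻)² (1 ⊗ v)) = 1 ⊗ (Φ₂² + Ω) v`.
-/

noncomputable section

/-- `Φ₂ = ∑_{n>0} n pₙ ∂/∂pₙ` on the rank-one Fock space `F = K[p₁, p₂, …]`. -/
def Phi2 {K : Type*} [Field K] (x : MvPolynomial ℕ+ K) : MvPolynomial ℕ+ K :=
  ∑ᶠ n : ℕ+, ((n : ℕ) : K) • (MvPolynomial.X n * MvPolynomial.pderiv n x)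

/-- `Ω = ∑_{n>0} n² pₙ ∂/∂pₙ` on the rank-one Fock space. -/
def Omega {K : Type*} [Field K] (x : MvPolynomial ℕ+ K) : MvPolynomial ℕ+ K :=
  ∑ᶠ n : ℕ+, (((n : ℕ) : K) ^ 2) • (MvPolynomial.X n * MvPolynomial.pderiv n x)

/-- `Φ₂⁻ = ∑_{n>0} n (p'ₙ - p''ₙ)(∂/∂p'ₙ - ∂/∂p''ₙ)` on the double Fock space
`F ⊗ F = K[p'₁, p'₂, …, p''₁, p''₂, …]`, realized as polynomials in variables indexed by
`ℕ+ ⊕ ℕ+` (`inl` for the `p'` and `inr` for the `p''` variables). -/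
def Phi2Minus {K : Type*} [Field K] (x : MvPolynomial (ℕ+ ⊕ ℕ+) K) :
    MvPolynomial (ℕ+ ⊕ ℕ+) K :=
  ∑ᶠ n : ℕ+, ((n : ℕ) : K) •
    ((MvPolynomial.X (Sum.inl n) - MvPolynomial.X (Sum.inr n)) *
      (MvPolynomial.pderiv (Sum.inl n) x - MvPolynomial.pderiv (Sum.inr n) x))

/-!
Both `Φ₂` and `Φ₂⁻` have the shape `E = ∑ cₙ aₙ Dₙ` with commuting derivations `Dₙ` satisfying
`Dₘ aₙ = κ δₘₙ`: `κ = 1` for `aₙ = pₙ`, `Dₙ = ∂/∂pₙ`, and `κ = 2` for `aₙ = p'ₙ - p''ₙ`,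
`Dₙ = ∂/∂p'ₙ - ∂/∂p''ₙ`. For such an operator `E² = κ ∑ cₙ² aₙ Dₙ + ∑ cₘ cₙ aₘ aₙ Dₘ Dₙ`.
On `1 ⊗ v` each `Dₙ` acts as `-∂/∂p''ₙ`, and the vacuum projection sends `aₙ` to `-p''ₙ`, so the
signs cancel in pairs: the second-order parts of `(Φ₂⁻)²` and `Φ₂²` agree, while the first-order
part is `2 Ω` instead of `Ω`.
-/

open MvPolynomial

section WeightedEuler

variable {K A ι : Type*} [CommSemiring K] [CommSemiring A] [Algebra K A]

def weightedEuler (a : ι → A) (D : ι → Derivation K A A) (c : ι → K) (w : A) : A :=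
  ∑ᶠ i, c i • (a i * D i w)

variable {a : ι → A} {D : ι → Derivation K A A} {w : A} {s : Finset ι}

theorem weightedEuler_eq_sum (c : ι → K) (hw : ∀ i ∉ s, D i w = 0) :
    weightedEuler a D c w = ∑ i ∈ s, c i • (a i * D i w) := by
  refine finsum_eq_finsetSum_of_support_subset _ fun i hi => ?_
  by_contra hs
  simp [hw i hs] at hi

theorem apply_weightedEuler_eq_zero (c : ι → K) (hne : ∀ i j, i ≠ j → D i (a j) = 0)
    (hcomm : ∀ i j x, D i (D j x) = D j (D i x)) (hw : ∀ i ∉ s, D i w = 0) {i : ι}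
    (hi : i ∉ s) : D i (weightedEuler a D c w) = 0 := by
  rw [weightedEuler_eq_sum c hw, map_sum]
  refine Finset.sum_eq_zero fun j hj => ?_
  rw [Derivation.map_smul, Derivation.leibniz, hcomm, hw i hi,
    hne i j (ne_of_mem_of_not_mem hj hi).symm]
  simp

theorem weightedEuler_weightedEuler (c : ι → K) {κ : A} (hself : ∀ i, D i (a i) = κ)
    (hne : ∀ i j, i ≠ j → D i (a j) = 0) (hcomm : ∀ i j x, D i (D j x) = D j (D i x))
    (hw : ∀ i ∉ s, D i w = 0) :
    weightedEuler a D c (weightedEuler a D c w) =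
      κ * ∑ i ∈ s, c i ^ 2 • (a i * D i w) +
        ∑ i ∈ s, ∑ j ∈ s, (c i * c j) • (a i * a j * D i (D j w)) := by
  rw [weightedEuler_eq_sum c fun i hi => apply_weightedEuler_eq_zero c hne hcomm hw hi,
    weightedEuler_eq_sum c hw, Finset.mul_sum, ← Finset.sum_add_distrib]
  refine Finset.sum_congr rfl fun i hi => ?_
  have hDE : D i (∑ j ∈ s, c j • (a j * D j w)) =
      c i • (κ * D i w) + ∑ j ∈ s, c j • (a j * D i (D j w)) := by
    have hfirst : ∑ j ∈ s, c j • (D j w * D i (a j)) = c i • (κ * D i w) := by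
      rw [Finset.sum_eq_single_of_mem i hi fun j _ hji => by simp [hne i j hji.symm], hself,
        mul_comm]
    simp only [map_sum, Derivation.map_smul, Derivation.leibniz, smul_eq_mul, smul_add,
      Finset.sum_add_distrib, hfirst]
    exact add_comm _ _
  rw [hDE, mul_add, smul_add, Finset.mul_sum, Finset.smul_sum]
  congr 1
  · simp only [Algebra.smul_def, map_pow]; ring
  · refine Finset.sum_congr rfl fun j _ => ?_
    simp only [Algebra.smul_def, map_mul]; ring

end WeightedEuler

section Antidiagonal

variable {R σ : Type*} [CommRing R]

theorem pderiv_pderiv_comm (i j : σ) (p : MvPolynomial σ R) :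
    pderiv i (pderiv j p) = pderiv j (pderiv i p) := by
  have h : ⁅pderiv i, pderiv j⁆ = (0 : Derivation R (MvPolynomial σ R) (MvPolynomial σ R)) :=
    derivation_ext fun k => by
      classical
      rw [Derivation.commutator_apply]
      simp [pderiv_X, Pi.single_apply, apply_ite]
  simpa [Derivation.commutator_apply, sub_eq_zero] using congr($h p)

def antidiagX (i : σ) : MvPolynomial (σ ⊕ σ) R := X (Sum.inl i) - X (Sum.inr i)

def antidiagPderiv (i : σ) : Derivation R (MvPolynomial (σ ⊕ σ) R) (MvPolynomial (σ ⊕ σ) R) :=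
  pderiv (Sum.inl i) - pderiv (Sum.inr i)

theorem antidiagPderiv_antidiagX_self (i : σ) :
    antidiagPderiv i (antidiagX i : MvPolynomial (σ ⊕ σ) R) = 2 := by
  simp [antidiagPderiv, antidiagX, pderiv_X_of_ne, one_add_one_eq_two]

theorem antidiagPderiv_antidiagX_of_ne {i j : σ} (h : i ≠ j) :
    antidiagPderiv i (antidiagX j : MvPolynomial (σ ⊕ σ) R) = 0 := by
  simp [antidiagPderiv, antidiagX, pderiv_X_of_ne, h.symm]

theorem antidiagPderiv_comm (i j : σ) (p : MvPolynomial (σ ⊕ σ) R) :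
    antidiagPderiv i (antidiagPderiv j p) = antidiagPderiv j (antidiagPderiv i p) := by
  simp only [antidiagPderiv, Derivation.coe_sub, Pi.sub_apply, map_sub]
  rw [pderiv_pderiv_comm (Sum.inl i), pderiv_pderiv_comm (Sum.inl i),
    pderiv_pderiv_comm (Sum.inr i), pderiv_pderiv_comm (Sum.inr i)]
  abel

theorem antidiagPderiv_rename_inr (i : σ) (p : MvPolynomial σ R) :
    antidiagPderiv i (rename Sum.inr p) = -rename Sum.inr (pderiv i p) := by
  have h : pderiv (Sum.inl i) (rename Sum.inr p) = 0 := by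
    classical
    refine pderiv_eq_zero_of_notMem_vars fun hi => ?_
    simpa using vars_rename Sum.inr p hi
  simp [antidiagPderiv, h, pderiv_rename Sum.inr_injective]

theorem aeval_vacuum_rename_inr (p : MvPolynomial σ R) :
    aeval (Sum.elim (fun _ : σ => (0 : MvPolynomial (σ ⊕ σ) R)) (fun n => X (Sum.inr n)))
      (rename Sum.inr p) = rename Sum.inr p := by
  rw [aeval_rename, rename_eq_aeval]; rfl

theorem aeval_vacuum_antidiagX (i : σ) :
    aeval (Sum.elim (fun _ : σ => (0 : MvPolynomial (σ ⊕ σ) R)) (fun n => X (Sum.inr n)))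
      (antidiagX i : MvPolynomial (σ ⊕ σ) R) = -rename Sum.inr (X i) := by
  simp [antidiagX]

end Antidiagonal

theorem Phi2_eq_weightedEuler {K : Type*} [Field K] (x : MvPolynomial ℕ+ K) :
    Phi2 x = weightedEuler X (fun n : ℕ+ => pderiv n) (fun n : ℕ+ => ((n : ℕ) : K)) x := rfl

theorem Omega_eq_weightedEuler {K : Type*} [Field K] (x : MvPolynomial ℕ+ K) :
    Omega x = weightedEuler X (fun n : ℕ+ => pderiv n) (fun n : ℕ+ => ((n : ℕ) : K) ^ 2) x := rfl

theorem Phi2Minus_eq_weightedEuler {K : Type*} [Field K] (x : MvPolynomial (ℕ+ ⊕ ℕ+) K) :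
    Phi2Minus x = weightedEuler antidiagX antidiagPderiv (fun n : ℕ+ => ((n : ℕ) : K)) x := rfl

theorem vacuum_compression_Phi2Minus_sq_general {K : Type*} [Field K]
    (v : MvPolynomial ℕ+ K) :
    MvPolynomial.aeval
        (Sum.elim (fun _ : ℕ+ => (0 : MvPolynomial (ℕ+ ⊕ ℕ+) K))
          (fun n : ℕ+ => MvPolynomial.X (Sum.inr n)))
        (Phi2Minus (Phi2Minus (MvPolynomial.rename Sum.inr v)))
      = MvPolynomial.rename Sum.inr (Phi2 (Phi2 v) + Omega v) := by
  have hv : ∀ n ∉ v.vars, pderiv n v = 0 := fun n hn => pderiv_eq_zero_of_notMem_vars hn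
  have hw : ∀ n ∉ v.vars, antidiagPderiv n (rename Sum.inr v) = 0 := fun n hn => by
    rw [antidiagPderiv_rename_inr, hv n hn, map_zero, neg_zero]
  rw [Phi2Minus_eq_weightedEuler, Phi2Minus_eq_weightedEuler,
    weightedEuler_weightedEuler _ antidiagPderiv_antidiagX_self
      (fun _ _ => antidiagPderiv_antidiagX_of_ne) antidiagPderiv_comm hw,
    Phi2_eq_weightedEuler, Phi2_eq_weightedEuler,
    weightedEuler_weightedEuler _ (fun n => pderiv_X_self n)
      (fun _ _ h => pderiv_X_of_ne (Ne.symm h)) pderiv_pderiv_comm hv,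
    Omega_eq_weightedEuler, weightedEuler_eq_sum _ hv]
  simp only [map_add, map_mul, map_sum, map_smul, map_neg, map_ofNat, map_one,
    antidiagPderiv_rename_inr, aeval_vacuum_rename_inr, aeval_vacuum_antidiagX, neg_mul_neg, neg_neg]
  ring

/-- **Vacuum compression of `(Φ₂⁻)²`.**  Let `K` be a field of characteristic zero.
On `F ⊗ F = K[p', p'']`, let `P⁽¹⁾ = π ⊗ id` be the projection sending every `p'`
variable to `0` (i.e. taking the constant term in the first factor), and embed
`v ∈ F` as `1 ⊗ v` (renaming variables `pₙ ↦ p''ₙ`).  Then for every `v ∈ F`: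
`P⁽¹⁾ ((Φ₂⁻)² (1 ⊗ v)) = 1 ⊗ (Φ₂² + Ω) v`. -/
theorem vacuum_compression_Phi2Minus_sq {K : Type*} [Field K] [CharZero K]
    (v : MvPolynomial ℕ+ K) :
    MvPolynomial.aeval
        (Sum.elim (fun _ : ℕ+ => (0 : MvPolynomial (ℕ+ ⊕ ℕ+) K))
          (fun n : ℕ+ => MvPolynomial.X (Sum.inr n)))
        (Phi2Minus (Phi2Minus (MvPolynomial.rename Sum.inr v)))
      = MvPolynomial.rename Sum.inr (Phi2 (Phi2 v) + Omega v) :=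
  vacuum_compression_Phi2Minus_sq_general v

end
end
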